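/- arXiv:2508.21664 — 7 statements merged into one kernel-verified Lean document; each statement's English description precedes it below -/
import Mathlib

section
/- Let μ be a probability measure on ℝ with cumulative distribution function F and finite first moment, let X and X' be independent random variables each with law μ, and let y ∈ ℝ. Then ∫ℝ (F(s) − 1_{y ≤ s})² ds = E|X − y| − (1/2) E|X − X'|. -/
open MeasureTheory ProbabilityTheory

lemma ind_sq_eq_indicator (a b : ℝ) :
    (fun s => ((if a ≤ s then (1:ℝ) else 0) - (if b ≤ s then 1 else 0)) ^ 2)
      = Set.indicator (Set.Ico (min a b) (max a b)) (fun _ => (1:ℝ)) := by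
  funext s
  by_cases ha : a ≤ s <;> by_cases hb : b ≤ s
  · simp [Set.indicator_apply, Set.mem_Ico, ha, hb, lt_max_iff, not_lt.2 ha, not_lt.2 hb]
  · simp [Set.indicator_apply, Set.mem_Ico, ha, hb, min_le_iff, lt_max_iff, not_le.mp hb]
  · simp [Set.indicator_apply, Set.mem_Ico, ha, hb, min_le_iff, lt_max_iff, not_le.mp ha]
  · simp [Set.indicator_apply, Set.mem_Ico, min_le_iff, ha, hb]

lemma ind_sq_integral (a b : ℝ) :
    ∫ s, ((if a ≤ s then (1:ℝ) else 0) - (if b ≤ s then 1 else 0)) ^ 2 = |a - b| := by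
  rw [ind_sq_eq_indicator, integral_indicator measurableSet_Ico, setIntegral_const,
    measureReal_def, Real.volume_Ico, smul_eq_mul, mul_one,
    ENNReal.toReal_ofReal (sub_nonneg.2 (min_le_max)), max_sub_min_eq_abs, abs_sub_comm]

lemma ind_sq_integrable (a b : ℝ) :
    Integrable (fun s => ((if a ≤ s then (1:ℝ) else 0) - (if b ≤ s then 1 else 0)) ^ 2) := by
  rw [ind_sq_eq_indicator]
  exact (integrable_indicator_iff measurableSet_Ico).2 <|
    integrableOn_const (by rw [Real.volume_Ico]; exact ENNReal.ofReal_ne_top)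

/-- Kernel (energy) representation of the CRPS: for a probability measure `μ` on `ℝ`
with CDF `F` and finite first moment, independent `X, X'` with law `μ`, and `y ∈ ℝ`,
`∫ (F(s) − 1_{y ≤ s})² ds = E|X − y| − (1/2) E|X − X'|`. -/
theorem crps_kernel_representation
    {Ω : Type*} [MeasureSpace Ω] [IsProbabilityMeasure (ℙ : Measure Ω)]
    (μ : Measure ℝ) [IsProbabilityMeasure μ]
    (F : ℝ → ℝ) (hF : ∀ s, F s = (μ (Set.Iic s)).toReal)
    (hmom : Integrable id μ)
    (X X' : Ω → ℝ) (hX : Measurable X) (hX' : Measurable X')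
    (hindep : IndepFun X X' ℙ)
    (hlX : Measure.map X ℙ = μ) (hlX' : Measure.map X' ℙ = μ)
    (y : ℝ) :
    ∫ s : ℝ, (F s - (if y ≤ s then (1 : ℝ) else 0)) ^ 2
      = (∫ ω, |X ω - y|) - (1 / 2) * ∫ ω, |X ω - X' ω| := by
  -- integrability of X and X'
  have hXint : Integrable X ℙ := by
    have h := hmom; rw [← hlX] at h
    exact (integrable_map_measure aestronglyMeasurable_id hX.aemeasurable).1 h
  have hX'int : Integrable X' ℙ := by
    have h := hmom; rw [← hlX'] at h
    exact (integrable_map_measure aestronglyMeasurable_id hX'.aemeasurable).1 h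
  -- CDF via laws
  have hμIic : ∀ (Z : Ω → ℝ), Measurable Z → Measure.map Z ℙ = μ →
      ∀ s : ℝ, (ℙ {ω | Z ω ≤ s}).toReal = F s := by
    intro Z hZ hlZ s
    rw [hF, ← hlZ, Measure.map_apply hZ measurableSet_Iic]
    rfl
  -- expectation of a two-valued function of Z
  have key : ∀ (s : ℝ) (Z : Ω → ℝ) (hZ : Measurable Z), Measure.map Z ℙ = μ →
      ∀ A B : ℝ, ∫ ω, (if Z ω ≤ s then A else B) = (A - B) * F s + B := by
    intro s Z hZ hlZ A B
    have hset : MeasurableSet {ω | Z ω ≤ s} := measurableSet_le hZ measurable_const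
    have heq : (fun ω => if Z ω ≤ s then A else B)
        = fun ω => Set.indicator {ω | Z ω ≤ s} (fun _ => A - B) ω + B := by
      funext ω; by_cases h : Z ω ≤ s <;> simp [Set.indicator_apply, h]
    rw [heq, integral_add ((integrable_indicator_iff hset).2
        (integrableOn_const (measure_ne_top _ _))) (integrable_const B),
      integral_indicator hset, setIntegral_const, integral_const, smul_eq_mul, smul_eq_mul,
      measureReal_def, measureReal_def, hμIic Z hZ hlZ s, measure_univ, ENNReal.toReal_one]
    ring
  -- integrability of indicators
  have intZ : ∀ (s : ℝ) (Z : Ω → ℝ), Measurable Z →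
      Integrable (fun ω => if Z ω ≤ s then (1:ℝ) else 0) ℙ := by
    intro s Z hZ
    have hset : MeasurableSet {ω | Z ω ≤ s} := measurableSet_le hZ measurable_const
    have heq : (fun ω => if Z ω ≤ s then (1:ℝ) else 0)
        = Set.indicator {ω | Z ω ≤ s} (fun _ => (1:ℝ)) := by
      funext ω; by_cases h : Z ω ≤ s <;> simp [Set.indicator_apply, h]
    rw [heq]
    exact (integrable_indicator_iff hset).2
      (integrableOn_const (measure_ne_top _ _))
  have intmul : ∀ s : ℝ, Integrable
      (fun ω => (if X ω ≤ s then (1:ℝ) else 0) * (if X' ω ≤ s then (1:ℝ) else 0)) ℙ := by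
    intro s
    have hset : MeasurableSet ({ω | X ω ≤ s} ∩ {ω | X' ω ≤ s}) :=
      (measurableSet_le hX measurable_const).inter (measurableSet_le hX' measurable_const)
    have heq : (fun ω => (if X ω ≤ s then (1:ℝ) else 0) * (if X' ω ≤ s then (1:ℝ) else 0))
        = Set.indicator ({ω | X ω ≤ s} ∩ {ω | X' ω ≤ s}) (fun _ => (1:ℝ)) := by
      funext ω
      by_cases h1 : X ω ≤ s <;> by_cases h2 : X' ω ≤ s <;>
        simp [Set.indicator_apply, h1, h2]
    rw [heq]
    exact (integrable_indicator_iff hset).2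
      (integrableOn_const (measure_ne_top _ _))
  -- independence: product expectation
  have hprod : ∀ s : ℝ, ∫ ω, (if X ω ≤ s then (1:ℝ) else 0) * (if X' ω ≤ s then (1:ℝ) else 0)
      = F s * F s := by
    intro s
    have hφ : Measurable fun x : ℝ => if x ≤ s then (1:ℝ) else 0 :=
      Measurable.ite measurableSet_Iic measurable_const measurable_const
    have hind : IndepFun (fun ω => if X ω ≤ s then (1:ℝ) else 0)
        (fun ω => if X' ω ≤ s then (1:ℝ) else 0) ℙ := hindep.comp hφ hφ
    have h2 : ∫ ω, (if X ω ≤ s then (1:ℝ) else 0) * (if X' ω ≤ s then (1:ℝ) else 0)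
        = (∫ ω, if X ω ≤ s then (1:ℝ) else 0) * ∫ ω, if X' ω ≤ s then (1:ℝ) else 0 :=
      hind.integral_mul_eq_mul_integral (intZ s X hX).aestronglyMeasurable (intZ s X' hX').aestronglyMeasurable
    rw [h2, key s X hX hlX 1 0, key s X' hX' hlX' 1 0]
    ring
  -- per-s expectations
  have hEf : ∀ s : ℝ, ∫ ω, ((if X ω ≤ s then (1:ℝ) else 0) - (if y ≤ s then 1 else 0)) ^ 2
      = (if y ≤ s then 1 - F s else F s) := by
    intro s
    by_cases h : y ≤ s
    · have heq : (fun ω => ((if X ω ≤ s then (1:ℝ) else 0) - (if y ≤ s then 1 else 0)) ^ 2)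
          = fun ω => if X ω ≤ s then (0:ℝ) else 1 := by
        funext ω; by_cases h1 : X ω ≤ s <;> simp [h, h1]
      rw [heq, key s X hX hlX 0 1]
      simp [h]; ring
    · have heq : (fun ω => ((if X ω ≤ s then (1:ℝ) else 0) - (if y ≤ s then 1 else 0)) ^ 2)
          = fun ω => if X ω ≤ s then (1:ℝ) else 0 := by
        funext ω; by_cases h1 : X ω ≤ s <;> simp [h, h1]
      rw [heq, key s X hX hlX 1 0]
      simp [h]
  have hEg : ∀ s : ℝ, ∫ ω, ((if X ω ≤ s then (1:ℝ) else 0) - (if X' ω ≤ s then 1 else 0)) ^ 2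
      = 2 * (F s - F s * F s) := by
    intro s
    have hptg : (fun ω => ((if X ω ≤ s then (1:ℝ) else 0) - (if X' ω ≤ s then 1 else 0)) ^ 2)
        = fun ω => ((if X ω ≤ s then (1:ℝ) else 0) + (if X' ω ≤ s then 1 else 0))
          - 2 * ((if X ω ≤ s then (1:ℝ) else 0) * (if X' ω ≤ s then 1 else 0)) := by
      funext ω
      by_cases h1 : X ω ≤ s <;> by_cases h2 : X' ω ≤ s <;> simp [h1, h2] <;> ring
    have hadd : Integrable (fun ω => (if X ω ≤ s then (1:ℝ) else 0)
        + (if X' ω ≤ s then (1:ℝ) else 0)) ℙ := (intZ s X hX).add (intZ s X' hX')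
    have hmul2 : Integrable (fun ω => 2 * ((if X ω ≤ s then (1:ℝ) else 0)
        * (if X' ω ≤ s then (1:ℝ) else 0))) ℙ := (intmul s).const_mul 2
    rw [hptg, integral_sub hadd hmul2,
      integral_add (intZ s X hX) (intZ s X' hX'), integral_const_mul, hprod s,
      key s X hX hlX 1 0, key s X' hX' hlX' 1 0]
    ring
  -- product integrability
  have hPm : Measurable (Function.uncurry fun (ω : Ω) (s : ℝ) =>
      ((if X ω ≤ s then (1:ℝ) else 0) - (if y ≤ s then 1 else 0)) ^ 2) := by
    apply Measurable.pow_const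
    exact Measurable.sub
      (Measurable.ite (measurableSet_le (hX.comp measurable_fst) measurable_snd)
        measurable_const measurable_const)
      (Measurable.ite (measurableSet_le measurable_const measurable_snd)
        measurable_const measurable_const)
  have hQm : Measurable (Function.uncurry fun (ω : Ω) (s : ℝ) =>
      ((if X ω ≤ s then (1:ℝ) else 0) - (if X' ω ≤ s then 1 else 0)) ^ 2) := by
    apply Measurable.pow_const
    exact Measurable.sub
      (Measurable.ite (measurableSet_le (hX.comp measurable_fst) measurable_snd)
        measurable_const measurable_const)
      (Measurable.ite (measurableSet_le (hX'.comp measurable_fst) measurable_snd)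
        measurable_const measurable_const)
  have hPint : Integrable (Function.uncurry fun (ω : Ω) (s : ℝ) =>
      ((if X ω ≤ s then (1:ℝ) else 0) - (if y ≤ s then 1 else 0)) ^ 2) (Measure.prod ℙ volume) := by
    refine (integrable_prod_iff hPm.aestronglyMeasurable).2 ⟨?_, ?_⟩
    · exact Filter.Eventually.of_forall fun ω => ind_sq_integrable (X ω) y
    · have heq : (fun ω => ∫ s, ‖((if X ω ≤ s then (1:ℝ) else 0) - (if y ≤ s then 1 else 0)) ^ 2‖)
          = fun ω => |X ω - y| := by
        funext ω
        simp only [Real.norm_eq_abs, abs_pow, sq_abs]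
        exact ind_sq_integral (X ω) y
      simp only [Function.uncurry_apply_pair]
      rw [heq]
      exact (hXint.sub (integrable_const y)).abs
  have hQint : Integrable (Function.uncurry fun (ω : Ω) (s : ℝ) =>
      ((if X ω ≤ s then (1:ℝ) else 0) - (if X' ω ≤ s then 1 else 0)) ^ 2) (Measure.prod ℙ volume) := by
    refine (integrable_prod_iff hQm.aestronglyMeasurable).2 ⟨?_, ?_⟩
    · exact Filter.Eventually.of_forall fun ω => ind_sq_integrable (X ω) (X' ω)
    · have heq : (fun ω => ∫ s, ‖((if X ω ≤ s then (1:ℝ) else 0) - (if X' ω ≤ s then 1 else 0)) ^ 2‖)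
          = fun ω => |X ω - X' ω| := by
        funext ω
        simp only [Real.norm_eq_abs, abs_pow, sq_abs]
        exact ind_sq_integral (X ω) (X' ω)
      simp only [Function.uncurry_apply_pair]
      rw [heq]
      exact (hXint.sub hX'int).abs
  -- Fubini swaps
  have hswapP : ∫ s, ∫ ω, ((if X ω ≤ s then (1:ℝ) else 0) - (if y ≤ s then 1 else 0)) ^ 2
      = ∫ ω, |X ω - y| := by
    rw [← integral_integral_swap hPint]
    exact integral_congr_ae (Filter.Eventually.of_forall fun ω => ind_sq_integral (X ω) y)
  have hswapQ : ∫ s, ∫ ω, ((if X ω ≤ s then (1:ℝ) else 0) - (if X' ω ≤ s then 1 else 0)) ^ 2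
      = ∫ ω, |X ω - X' ω| := by
    rw [← integral_integral_swap hQint]
    exact integral_congr_ae (Filter.Eventually.of_forall fun ω => ind_sq_integral (X ω) (X' ω))
  -- pointwise identity in s
  have hc : ∀ s : ℝ, (F s - (if y ≤ s then (1:ℝ) else 0)) ^ 2
      = (∫ ω, ((if X ω ≤ s then (1:ℝ) else 0) - (if y ≤ s then 1 else 0)) ^ 2)
        - (1/2) * ∫ ω, ((if X ω ≤ s then (1:ℝ) else 0) - (if X' ω ≤ s then 1 else 0)) ^ 2 := by
    intro s
    rw [hEf s, hEg s]
    by_cases h : y ≤ s <;> simp [h] <;> ring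
  have hA : Integrable (fun s : ℝ => ∫ ω, ((if X ω ≤ s then (1:ℝ) else 0)
      - (if y ≤ s then 1 else 0)) ^ 2) volume := hPint.integral_prod_right
  have hB : Integrable (fun s : ℝ => (1/2) * ∫ ω, ((if X ω ≤ s then (1:ℝ) else 0)
      - (if X' ω ≤ s then 1 else 0)) ^ 2) volume :=
    (hQint.integral_prod_right).const_mul (1/2)
  rw [integral_congr_ae (Filter.Eventually.of_forall hc),
    integral_sub hA hB, integral_const_mul, hswapP, hswapQ]
end

section
/- Let x_1, …, x_M be real numbers with M ≥ 1, let F(s) = (1/M)·#{i : x_i ≤ s} be their empirical cumulative distribution function, and let y ∈ ℝ. Then ∫ℝ (F(s) − 1_{y ≤ s})² ds = (1/M) Σ_{i=1}^M |x_i − y| − (1/(2M²)) Σ_{i=1}^M Σ_{j=1}^M |x_i − x_j|. -/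
open MeasureTheory

open Set

lemma crps_aux_eq (a b y : ℝ) :
    (fun s : ℝ => ((if a ≤ s then (1:ℝ) else 0) - (if y ≤ s then 1 else 0)) *
      ((if b ≤ s then (1:ℝ) else 0) - (if y ≤ s then 1 else 0)))
    = (Ico (max a b) y).indicator (fun _ => (1:ℝ)) + (Ico y (min a b)).indicator (fun _ => (1:ℝ)) := by
  funext s
  rcases le_total a b with hab | hab
  · rw [max_eq_right hab, min_eq_left hab]
    simp only [Pi.add_apply, Set.indicator_apply, Set.mem_Ico]
    split_ifs <;> simp_all [not_le, not_lt] <;> linarith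
  · rw [max_eq_left hab, min_eq_right hab]
    simp only [Pi.add_apply, Set.indicator_apply, Set.mem_Ico]
    split_ifs <;> simp_all [not_le, not_lt] <;> linarith

lemma crps_ind_integrable (c d : ℝ) : Integrable ((Ico c d).indicator (fun _ => (1:ℝ))) := by
  rw [integrable_indicator_iff measurableSet_Ico]
  exact integrableOn_const (by rw [Real.volume_Ico]; exact ENNReal.ofReal_ne_top)

lemma crps_aux_integrable (a b y : ℝ) :
    Integrable (fun s : ℝ => ((if a ≤ s then (1:ℝ) else 0) - (if y ≤ s then 1 else 0)) *
      ((if b ≤ s then (1:ℝ) else 0) - (if y ≤ s then 1 else 0))) := by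
  rw [crps_aux_eq]
  exact (crps_ind_integrable _ _).add (crps_ind_integrable _ _)

lemma crps_ind_integral (c d : ℝ) :
    ∫ s : ℝ, (Ico c d).indicator (fun _ => (1:ℝ)) s = max (d - c) 0 := by
  rw [MeasureTheory.integral_indicator measurableSet_Ico]
  simp only [integral_const, smul_eq_mul, mul_one, Measure.restrict_apply, MeasurableSet.univ,
    univ_inter, Real.volume_Ico]
  rcases le_total (d - c) 0 with h | h
  · simp [ENNReal.ofReal_eq_zero.2 h, max_eq_right h]
  · rw [Measure.real, Measure.restrict_apply MeasurableSet.univ, univ_inter, Real.volume_Ico,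
      ENNReal.toReal_ofReal h, max_eq_left h]

lemma crps_aux_integral (a b y : ℝ) :
    ∫ s : ℝ, ((if a ≤ s then (1:ℝ) else 0) - (if y ≤ s then 1 else 0)) *
      ((if b ≤ s then (1:ℝ) else 0) - (if y ≤ s then 1 else 0))
    = (|a - y| + |b - y| - |a - b|) / 2 := by
  rw [crps_aux_eq]
  rw [MeasureTheory.integral_add' (crps_ind_integrable _ _) (crps_ind_integrable _ _)]
  rw [crps_ind_integral, crps_ind_integral]
  rcases le_total a b with hab | hab
  · rw [max_eq_right hab, min_eq_left hab]
    rcases le_total b y with hby | hby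
    · rw [max_eq_left (by linarith : (0:ℝ) ≤ y - b), max_eq_right (by linarith : a - y ≤ 0),
        abs_of_nonpos (by linarith : a - y ≤ 0), abs_of_nonpos (by linarith : b - y ≤ 0),
        abs_of_nonpos (by linarith : a - b ≤ 0)]
      ring
    · rcases le_total a y with hay | hay
      · rw [max_eq_right (by linarith : y - b ≤ 0), max_eq_right (by linarith : a - y ≤ 0),
          abs_of_nonpos (by linarith : a - y ≤ 0), abs_of_nonneg (by linarith : (0:ℝ) ≤ b - y),
          abs_of_nonpos (by linarith : a - b ≤ 0)]
        ring
      · rw [max_eq_right (by linarith : y - b ≤ 0), max_eq_left (by linarith : (0:ℝ) ≤ a - y),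
          abs_of_nonneg (by linarith : (0:ℝ) ≤ a - y), abs_of_nonneg (by linarith : (0:ℝ) ≤ b - y),
          abs_of_nonpos (by linarith : a - b ≤ 0)]
        ring
  · rw [max_eq_left hab, min_eq_right hab]
    rcases le_total a y with hay | hay
    · rw [max_eq_left (by linarith : (0:ℝ) ≤ y - a), max_eq_right (by linarith : b - y ≤ 0),
        abs_of_nonpos (by linarith : a - y ≤ 0), abs_of_nonpos (by linarith : b - y ≤ 0),
        abs_of_nonneg (by linarith : (0:ℝ) ≤ a - b)]
      ring
    · rcases le_total b y with hby | hby
      · rw [max_eq_right (by linarith : y - a ≤ 0), max_eq_right (by linarith : b - y ≤ 0),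
          abs_of_nonneg (by linarith : (0:ℝ) ≤ a - y), abs_of_nonpos (by linarith : b - y ≤ 0),
          abs_of_nonneg (by linarith : (0:ℝ) ≤ a - b)]
        ring
      · rw [max_eq_right (by linarith : y - a ≤ 0), max_eq_left (by linarith : (0:ℝ) ≤ b - y),
          abs_of_nonneg (by linarith : (0:ℝ) ≤ a - y), abs_of_nonneg (by linarith : (0:ℝ) ≤ b - y),
          abs_of_nonneg (by linarith : (0:ℝ) ≤ a - b)]
        ring


/-- Discrete formula for the CRPS of an empirical CDF: for an ensemble `x₁, …, x_M`
with empirical CDF `F` and an observation `y`,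
`∫ (F(s) − 1_{y ≤ s})² ds = (1/M) Σᵢ |xᵢ − y| − (1/(2M²)) Σᵢ Σⱼ |xᵢ − xⱼ|`. -/
theorem crps_empirical_cdf_discrete_formula
    (M : ℕ) (hM : 1 ≤ M) (x : Fin M → ℝ) (y : ℝ)
    (F : ℝ → ℝ)
    (hF : ∀ s, F s = ((Finset.univ.filter (fun i => x i ≤ s)).card : ℝ) / M) :
    ∫ s : ℝ, (F s - (if y ≤ s then (1 : ℝ) else 0)) ^ 2
      = (1 / M) * ∑ i, |x i - y|
        - (1 / (2 * (M : ℝ) ^ 2)) * ∑ i, ∑ j, |x i - x j| := by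
  have hM0 : (M : ℝ) ≠ 0 := Nat.cast_ne_zero.2 (by omega)
  have h2 : ∀ s, (F s - (if y ≤ s then (1 : ℝ) else 0)) ^ 2
      = (1 / (M : ℝ) ^ 2) * ∑ i, ∑ j,
        (((if x i ≤ s then (1:ℝ) else 0) - (if y ≤ s then 1 else 0)) *
          ((if x j ≤ s then (1:ℝ) else 0) - (if y ≤ s then 1 else 0))) := by
    intro s
    have hcard : ((Finset.univ.filter (fun i => x i ≤ s)).card : ℝ)
        = ∑ i, (if x i ≤ s then (1:ℝ) else 0) := by
      rw [Finset.card_filter]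
      push_cast
      simp
    have h1 : F s - (if y ≤ s then (1:ℝ) else 0)
        = (1 / (M:ℝ)) * ∑ i, ((if x i ≤ s then (1:ℝ) else 0) - (if y ≤ s then 1 else 0)) := by
      rw [hF, hcard, Finset.sum_sub_distrib, Finset.sum_const, Finset.card_univ,
        Fintype.card_fin, nsmul_eq_mul]
      field_simp
    rw [h1, mul_pow, div_pow, one_pow, pow_two, pow_two, Finset.sum_mul_sum]
  simp only [h2]
  rw [integral_const_mul]
  rw [integral_finset_sum _ (fun i _ => integrable_finset_sum _
    (fun j _ => crps_aux_integrable (x i) (x j) y))]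
  have h3 : ∀ i : Fin M, (∫ s : ℝ, ∑ j,
      (((if x i ≤ s then (1:ℝ) else 0) - (if y ≤ s then 1 else 0)) *
        ((if x j ≤ s then (1:ℝ) else 0) - (if y ≤ s then 1 else 0))))
      = ∑ j, ((|x i - y| + |x j - y| - |x i - x j|) / 2) := by
    intro i
    rw [integral_finset_sum _ (fun j _ => crps_aux_integrable (x i) (x j) y)]
    exact Finset.sum_congr rfl fun j _ => crps_aux_integral (x i) (x j) y
  simp only [h3]
  have h4 : ∀ i : Fin M, ∑ j, ((|x i - y| + |x j - y| - |x i - x j|) / 2)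
      = ((M:ℝ) * |x i - y| + (∑ j, |x j - y|) - ∑ j, |x i - x j|) / 2 := by
    intro i
    rw [← Finset.sum_div]
    congr 1
    rw [Finset.sum_sub_distrib, Finset.sum_add_distrib, Finset.sum_const, Finset.card_univ,
      Fintype.card_fin, nsmul_eq_mul]
  simp only [h4]
  rw [← Finset.sum_div, Finset.sum_sub_distrib, Finset.sum_add_distrib, ← Finset.mul_sum,
    Finset.sum_const, Finset.card_univ, Fintype.card_fin, nsmul_eq_mul]
  field_simp
  ring
end

section
/- Let μ be a probability measure on ℝ with cumulative distribution function F and finite first moment, let X_1, …, X_M be independent random variables each with law μ with M ≥ 2, and let y ∈ ℝ. Then E[ (1/M) Σ_{i=1}^M |X_i − y| − (1/(2M(M−1))) Σ_{i ≠ j} |X_i − X_j| ] = CRPS(F, y), i.e. the fair estimator of the CRPS is unbiased. -/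
open MeasureTheory ProbabilityTheory

open Set
lemma abs_eq_lintegral_indicator (a b : ℝ) :
    ENNReal.ofReal |a - b| =
      ∫⁻ s, ((Ico a b).indicator 1 s + (Ico b a).indicator 1 s) := by
  rw [lintegral_add_left ((measurable_one.indicator measurableSet_Ico)),
    lintegral_indicator_one measurableSet_Ico, lintegral_indicator_one measurableSet_Ico,
    Real.volume_Ico, Real.volume_Ico]
  rcases le_total a b with h | h
  · rw [abs_of_nonpos (by linarith), ENNReal.ofReal_of_nonpos (by linarith) (p := a - b)]
    simp [neg_sub]
  · rw [abs_of_nonneg (by linarith), ENNReal.ofReal_of_nonpos (by linarith) (p := b - a)]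
    simp

lemma key_lintegral (ν ρ : Measure ℝ) [IsProbabilityMeasure ν] [IsProbabilityMeasure ρ] :
    ∫⁻ p, ENNReal.ofReal |p.1 - p.2| ∂(ν.prod ρ) =
      ∫⁻ s, (ν (Iic s) * ρ (Ioi s) + ν (Ioi s) * ρ (Iic s)) := by
  have hset1 : MeasurableSet {q : (ℝ × ℝ) × ℝ | q.1.1 ≤ q.2 ∧ q.2 < q.1.2} :=
    (measurableSet_le (measurable_fst.comp measurable_fst) measurable_snd).inter
      (measurableSet_lt measurable_snd (measurable_snd.comp measurable_fst))
  have hset2 : MeasurableSet {q : (ℝ × ℝ) × ℝ | q.1.2 ≤ q.2 ∧ q.2 < q.1.1} :=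
    (measurableSet_le (measurable_snd.comp measurable_fst) measurable_snd).inter
      (measurableSet_lt measurable_snd (measurable_fst.comp measurable_fst))
  set f : ℝ × ℝ → ℝ → ENNReal := fun p s =>
    {q : (ℝ × ℝ) × ℝ | q.1.1 ≤ q.2 ∧ q.2 < q.1.2}.indicator 1 (p, s) +
    {q : (ℝ × ℝ) × ℝ | q.1.2 ≤ q.2 ∧ q.2 < q.1.1}.indicator 1 (p, s) with hf
  have hmeas : AEMeasurable (Function.uncurry f) ((ν.prod ρ).prod volume) := by
    apply Measurable.aemeasurable
    apply Measurable.add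
    · exact (measurable_one.indicator hset1)
    · exact (measurable_one.indicator hset2)
  calc ∫⁻ p, ENNReal.ofReal |p.1 - p.2| ∂(ν.prod ρ)
      = ∫⁻ p, ∫⁻ s, f p s ∂(volume) ∂(ν.prod ρ) := by
        refine lintegral_congr fun p => ?_
        rw [abs_eq_lintegral_indicator]
        refine lintegral_congr fun s => ?_
        have h1 : (Ico p.1 p.2).indicator (1 : ℝ → ENNReal) s =
            {q : (ℝ × ℝ) × ℝ | q.1.1 ≤ q.2 ∧ q.2 < q.1.2}.indicator 1 (p, s) := by
          by_cases h : s ∈ Ico p.1 p.2 <;>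
            simp_all [Set.indicator_apply, Set.mem_Ico]
        have h2 : (Ico p.2 p.1).indicator (1 : ℝ → ENNReal) s =
            {q : (ℝ × ℝ) × ℝ | q.1.2 ≤ q.2 ∧ q.2 < q.1.1}.indicator 1 (p, s) := by
          by_cases h : s ∈ Ico p.2 p.1 <;>
            simp_all [Set.indicator_apply, Set.mem_Ico]
        rw [h1, h2]
    _ = ∫⁻ s, ∫⁻ p, f p s ∂(ν.prod ρ) ∂(volume) := lintegral_lintegral_swap hmeas
    _ = ∫⁻ s, (ν (Iic s) * ρ (Ioi s) + ν (Ioi s) * ρ (Iic s)) := by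
        refine lintegral_congr fun s => ?_
        have e1 : ∀ p : ℝ × ℝ, {q : (ℝ × ℝ) × ℝ | q.1.1 ≤ q.2 ∧ q.2 < q.1.2}.indicator 1 (p, s)
            = (Iic s ×ˢ Ioi s).indicator (1 : ℝ × ℝ → ENNReal) p := by
          intro p
          by_cases h : p ∈ Iic s ×ˢ Ioi s <;>
            simp_all [Set.indicator_apply, Set.mem_prod, Set.mem_Iic, Set.mem_Ioi, and_comm]
        have e2 : ∀ p : ℝ × ℝ, {q : (ℝ × ℝ) × ℝ | q.1.2 ≤ q.2 ∧ q.2 < q.1.1}.indicator 1 (p, s)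
            = (Ioi s ×ˢ Iic s).indicator (1 : ℝ × ℝ → ENNReal) p := by
          intro p
          by_cases h : p ∈ Ioi s ×ˢ Iic s <;>
            simp_all [Set.indicator_apply, Set.mem_prod, Set.mem_Iic, Set.mem_Ioi, and_comm]
        simp only [hf]
        rw [lintegral_congr (fun p => by rw [e1 p, e2 p]),
          lintegral_add_left (measurable_one.indicator (measurableSet_Iic.prod measurableSet_Ioi)),
          lintegral_indicator_one (measurableSet_Iic.prod measurableSet_Ioi),
          lintegral_indicator_one (measurableSet_Ioi.prod measurableSet_Iic),
          Measure.prod_prod, Measure.prod_prod]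

lemma crps_core (μ : Measure ℝ) [IsProbabilityMeasure μ] (F : ℝ → ℝ)
    (hF : ∀ s, F s = (μ (Set.Iic s)).toReal) (hmom : Integrable id μ) (y : ℝ) :
    (∫ x, |x - y| ∂μ) - (∫ p : ℝ × ℝ, |p.1 - p.2| ∂(μ.prod μ)) / 2
      = ∫ s : ℝ, (F s - (if y ≤ s then (1 : ℝ) else 0)) ^ 2 := by
  set I : ℝ → ℝ := fun s => if y ≤ s then (1 : ℝ) else 0 with hI
  set φ : ℝ → ℝ := fun s => F s * (1 - I s) + (1 - F s) * I s with hφ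
  set ψ : ℝ → ℝ := fun s => 2 * (F s * (1 - F s)) with hψ
  have hF0 : ∀ s, 0 ≤ F s := fun s => (hF s) ▸ ENNReal.toReal_nonneg
  have hF1 : ∀ s, F s ≤ 1 := by
    intro s; rw [hF s]
    exact ENNReal.toReal_le_of_le_ofReal zero_le_one (by simpa using prob_le_one)
  have hFmono : Monotone F := by
    intro a b hab
    rw [hF a, hF b]
    exact ENNReal.toReal_mono (measure_ne_top _ _) (measure_mono (Iic_subset_Iic.2 hab))
  have hFm : Measurable F := hFmono.measurable
  have hIm : Measurable I := by
    have : I = (Set.Ici y).indicator (fun _ => (1 : ℝ)) := by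
      funext s; by_cases h : y ≤ s <;> simp [hI, Set.indicator_apply, Set.mem_Ici, h]
    rw [this]; exact measurable_const.indicator measurableSet_Ici
  have hI01 : ∀ s, I s = 0 ∨ I s = 1 := by
    intro s; by_cases h : y ≤ s <;> simp [hI, h]
  have hIic : ∀ s, μ (Iic s) = ENNReal.ofReal (F s) := by
    intro s; rw [hF s, ENNReal.ofReal_toReal (measure_ne_top _ _)]
  have hIoi : ∀ s, μ (Ioi s) = ENNReal.ofReal (1 - F s) := by
    intro s
    have h1 : μ (Ioi s) = 1 - μ (Iic s) := by
      rw [← Set.compl_Iic, measure_compl measurableSet_Iic (measure_ne_top _ _), measure_univ]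
    rw [h1, hIic s, ENNReal.ofReal_sub _ (hF0 s), ENNReal.ofReal_one]
  have hφ0 : ∀ s, 0 ≤ φ s := by
    intro s
    rcases hI01 s with h | h <;>
      · rw [hφ]; simp only [h]
        nlinarith [hF0 s, hF1 s]
  have hψ0 : ∀ s, 0 ≤ ψ s := by
    intro s; rw [hψ]; simp only []; nlinarith [hF0 s, hF1 s]
  have hφm : Measurable φ := by
    apply Measurable.add
    · exact hFm.mul (measurable_const.sub hIm)
    · exact (measurable_const.sub hFm).mul hIm
  have hψm : Measurable ψ := measurable_const.mul (hFm.mul (measurable_const.sub hFm))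
  -- the |x - y| side
  have habs_y : Integrable (fun x => |x - y|) μ := (hmom.sub (integrable_const y)).abs
  have hAeq : ∫⁻ x, ENNReal.ofReal |x - y| ∂μ = ∫⁻ s, ENNReal.ofReal (φ s) := by
    have h1 : ∫⁻ x, ENNReal.ofReal |x - y| ∂μ
        = ∫⁻ p, ENNReal.ofReal |p.1 - p.2| ∂(μ.prod (Measure.dirac y)) := by
      rw [MeasureTheory.lintegral_prod (fun p : ℝ × ℝ => ENNReal.ofReal |p.1 - p.2|) ((measurable_fst.sub measurable_snd).abs.ennreal_ofReal).aemeasurable]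
      refine (lintegral_congr fun x => ?_).symm
      rw [lintegral_dirac]
    rw [h1, key_lintegral]
    refine lintegral_congr fun s => ?_
    by_cases h : y ≤ s
    · have h2 : (Measure.dirac y) (Ioi s) = 0 := by
        rw [Measure.dirac_apply]; simp [Set.indicator_apply, Set.mem_Ioi, not_lt.mpr h]
      have h3 : (Measure.dirac y) (Iic s) = 1 := by
        rw [Measure.dirac_apply]; simp [Set.indicator_apply, Set.mem_Iic, h]
      rw [h2, h3, hIoi s]
      simp [hφ, hI, h]
    · have h2 : (Measure.dirac y) (Ioi s) = 1 := by
        rw [Measure.dirac_apply]; simp [Set.indicator_apply, Set.mem_Ioi, not_le.mp h]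
      have h3 : (Measure.dirac y) (Iic s) = 0 := by
        rw [Measure.dirac_apply]; simp [Set.indicator_apply, Set.mem_Iic, h]
      rw [h2, h3, hIic s]
      simp [hφ, hI, h]
  have hAfin : ∫⁻ s, ENNReal.ofReal (φ s) ≠ ⊤ := by
    rw [← hAeq]
    exact ((hasFiniteIntegral_iff_ofReal (Filter.Eventually.of_forall
      fun x => abs_nonneg _)).mp habs_y.2).ne
  have hφint : Integrable φ := by
    refine ⟨hφm.aestronglyMeasurable, ?_⟩
    rw [hasFiniteIntegral_iff_ofReal (Filter.Eventually.of_forall hφ0)]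
    exact hAfin.lt_top
  have hA : ∫ x, |x - y| ∂μ = ∫ s, φ s := by
    rw [integral_eq_lintegral_of_nonneg_ae (Filter.Eventually.of_forall fun x => abs_nonneg _)
        habs_y.1,
      integral_eq_lintegral_of_nonneg_ae (Filter.Eventually.of_forall hφ0)
        hφm.aestronglyMeasurable, hAeq]
  -- the |p.1 - p.2| side
  have hfst : Integrable (fun p : ℝ × ℝ => p.1) (μ.prod μ) := by
    have hmap : Measure.map Prod.fst (μ.prod μ) = μ := by
      rw [Measure.map_fst_prod]; simp
    have h := (integrable_map_measure (by rw [hmap]; exact hmom.1)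
      measurable_fst.aemeasurable).mp (by rw [hmap]; exact hmom)
    simpa [Function.comp] using h
  have hsnd : Integrable (fun p : ℝ × ℝ => p.2) (μ.prod μ) := by
    have hmap : Measure.map Prod.snd (μ.prod μ) = μ := by
      rw [Measure.map_snd_prod]; simp
    have h := (integrable_map_measure (by rw [hmap]; exact hmom.1)
      measurable_snd.aemeasurable).mp (by rw [hmap]; exact hmom)
    simpa [Function.comp] using h
  have habs_p : Integrable (fun p : ℝ × ℝ => |p.1 - p.2|) (μ.prod μ) := (hfst.sub hsnd).abs
  have hBeq : ∫⁻ p : ℝ × ℝ, ENNReal.ofReal |p.1 - p.2| ∂(μ.prod μ)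
      = ∫⁻ s, ENNReal.ofReal (ψ s) := by
    rw [key_lintegral]
    refine lintegral_congr fun s => ?_
    rw [hIic s, hIoi s, ← ENNReal.ofReal_mul (hF0 s),
      ← ENNReal.ofReal_mul (by linarith [hF1 s] : (0:ℝ) ≤ 1 - F s),
      ← ENNReal.ofReal_add (by nlinarith [hF0 s, hF1 s]) (by nlinarith [hF0 s, hF1 s])]
    congr 1
    rw [hψ]; ring
  have hBfin : ∫⁻ s, ENNReal.ofReal (ψ s) ≠ ⊤ := by
    rw [← hBeq]
    exact ((hasFiniteIntegral_iff_ofReal (Filter.Eventually.of_forall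
      fun p => abs_nonneg _)).mp habs_p.2).ne
  have hψint : Integrable ψ := by
    refine ⟨hψm.aestronglyMeasurable, ?_⟩
    rw [hasFiniteIntegral_iff_ofReal (Filter.Eventually.of_forall hψ0)]
    exact hBfin.lt_top
  have hB : ∫ p : ℝ × ℝ, |p.1 - p.2| ∂(μ.prod μ) = ∫ s, ψ s := by
    rw [integral_eq_lintegral_of_nonneg_ae (Filter.Eventually.of_forall fun p => abs_nonneg _)
        habs_p.1,
      integral_eq_lintegral_of_nonneg_ae (Filter.Eventually.of_forall hψ0)
        hψm.aestronglyMeasurable, hBeq]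
  rw [hA, hB]
  have hdiv : (∫ s, ψ s) / 2 = ∫ s, ψ s / 2 := by rw [integral_div]
  rw [hdiv, ← integral_sub hφint (hψint.div_const 2)]
  refine integral_congr_ae (Filter.Eventually.of_forall fun s => ?_)
  show φ s - ψ s / 2 = (F s - I s) ^ 2
  rcases hI01 s with h | h <;>
    · rw [hφ, hψ]; simp only [h]; ring


/-- The fair estimator of the CRPS is unbiased: for `X₁, …, X_M` i.i.d. with law `μ`
(with CDF `F` and finite first moment), `M ≥ 2`, and `y ∈ ℝ`,
`E[(1/M) Σᵢ |Xᵢ − y| − (1/(2M(M−1))) Σ_{i ≠ j} |Xᵢ − Xⱼ|] = CRPS(F, y)`. -/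
theorem fair_crps_estimator_unbiased
    {Ω : Type*} [MeasureSpace Ω] [IsProbabilityMeasure (ℙ : Measure Ω)]
    (μ : Measure ℝ) [IsProbabilityMeasure μ]
    (F : ℝ → ℝ) (hF : ∀ s, F s = (μ (Set.Iic s)).toReal)
    (hmom : Integrable id μ)
    (M : ℕ) (hM : 2 ≤ M)
    (X : Fin M → Ω → ℝ) (hXm : ∀ i, Measurable (X i))
    (hindep : iIndepFun X ℙ)
    (hlaw : ∀ i, Measure.map (X i) ℙ = μ)
    (y : ℝ) :
    (∫ ω, ((1 / M) * ∑ i, |X i ω - y|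
      - (1 / (2 * (M : ℝ) * ((M : ℝ) - 1)))
          * ∑ i, ∑ j ∈ Finset.univ.erase i, |X i ω - X j ω|))
      = ∫ s : ℝ, (F s - (if y ≤ s then (1 : ℝ) else 0)) ^ 2 := by
  set A : ℝ := ∫ x, |x - y| ∂μ with hAdef
  set B : ℝ := ∫ p : ℝ × ℝ, |p.1 - p.2| ∂(μ.prod μ) with hBdef
  have habs_y : Integrable (fun x => |x - y|) μ := (hmom.sub (integrable_const y)).abs
  have hfst : Integrable (fun p : ℝ × ℝ => p.1) (μ.prod μ) := by
    have hmap : Measure.map Prod.fst (μ.prod μ) = μ := by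
      rw [Measure.map_fst_prod]; simp
    have h := (integrable_map_measure (by rw [hmap]; exact hmom.1)
      measurable_fst.aemeasurable).mp (by rw [hmap]; exact hmom)
    simpa [Function.comp] using h
  have hsnd : Integrable (fun p : ℝ × ℝ => p.2) (μ.prod μ) := by
    have hmap : Measure.map Prod.snd (μ.prod μ) = μ := by
      rw [Measure.map_snd_prod]; simp
    have h := (integrable_map_measure (by rw [hmap]; exact hmom.1)
      measurable_snd.aemeasurable).mp (by rw [hmap]; exact hmom)
    simpa [Function.comp] using h
  have habs_p : Integrable (fun p : ℝ × ℝ => |p.1 - p.2|) (μ.prod μ) := (hfst.sub hsnd).abs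
  have hXint : ∀ i, Integrable (fun ω => |X i ω - y|) ℙ := by
    intro i
    have h := (integrable_map_measure (by rw [hlaw i]; exact habs_y.1)
      (hXm i).aemeasurable).mp (by rw [hlaw i]; exact habs_y)
    simpa [Function.comp_def] using h
  have hXeq : ∀ i, ∫ ω, |X i ω - y| = A := by
    intro i
    have h := integral_map (f := fun x => |x - y|) (hXm i).aemeasurable
      (by rw [hlaw i]; exact habs_y.1)
    rw [hlaw i] at h
    rw [hAdef, h]
  have hmapij : ∀ i j, i ≠ j → Measure.map (fun ω => (X i ω, X j ω)) ℙ = μ.prod μ := by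
    intro i j hij
    have h := hindep.indepFun hij
    rw [(indepFun_iff_map_prod_eq_prod_map_map (hXm i).aemeasurable
      (hXm j).aemeasurable).mp h, hlaw i, hlaw j]
  have hPint : ∀ i j, i ≠ j → Integrable (fun ω => |X i ω - X j ω|) ℙ := by
    intro i j hij
    have h := (integrable_map_measure (f := fun ω => (X i ω, X j ω))
      (g := fun p : ℝ × ℝ => |p.1 - p.2|)
      (by rw [hmapij i j hij]; exact habs_p.1)
      ((hXm i).prodMk (hXm j)).aemeasurable).mp (by rw [hmapij i j hij]; exact habs_p)
    simpa [Function.comp_def] using h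
  have hPeq : ∀ i j, i ≠ j → ∫ ω, |X i ω - X j ω| = B := by
    intro i j hij
    have h := integral_map (f := fun p : ℝ × ℝ => |p.1 - p.2|)
      ((hXm i).prodMk (hXm j)).aemeasurable
      (by rw [hmapij i j hij]; exact habs_p.1)
    rw [hmapij i j hij] at h
    rw [hBdef, h]
  have hS1 : Integrable (fun ω => ∑ i, |X i ω - y|) ℙ :=
    integrable_finset_sum _ fun i _ => hXint i
  have hS2 : Integrable (fun ω => ∑ i, ∑ j ∈ Finset.univ.erase i, |X i ω - X j ω|) ℙ :=
    integrable_finset_sum _ fun i _ => integrable_finset_sum _ fun j hj =>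
      hPint i j (Finset.ne_of_mem_erase hj).symm
  have step : (∫ ω, ((1 / M) * ∑ i, |X i ω - y|
      - (1 / (2 * (M : ℝ) * ((M : ℝ) - 1)))
          * ∑ i, ∑ j ∈ Finset.univ.erase i, |X i ω - X j ω|)) = A - B / 2 := by
    rw [integral_sub (hS1.const_mul _) (hS2.const_mul _), integral_const_mul, integral_const_mul,
      integral_finset_sum _ (fun i _ => hXint i),
      integral_finset_sum _ (fun i _ => integrable_finset_sum _ fun j hj =>
        hPint i j (Finset.ne_of_mem_erase hj).symm)]
    have e1 : ∑ i : Fin M, ∫ ω, |X i ω - y| = (M : ℝ) * A := by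
      rw [Finset.sum_congr rfl fun i _ => hXeq i]
      simp [Finset.sum_const, mul_comm]
    have e2 : ∑ i : Fin M, ∫ ω, ∑ j ∈ Finset.univ.erase i, |X i ω - X j ω|
        = (M : ℝ) * ((M : ℝ) - 1) * B := by
      have inner : ∀ i : Fin M, ∫ ω, ∑ j ∈ Finset.univ.erase i, |X i ω - X j ω|
          = ((M : ℝ) - 1) * B := by
        intro i
        rw [integral_finset_sum _ (fun j hj => hPint i j (Finset.ne_of_mem_erase hj).symm),
          Finset.sum_congr rfl fun j hj => hPeq i j (Finset.ne_of_mem_erase hj).symm]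
        rw [Finset.sum_const, Finset.card_erase_of_mem (Finset.mem_univ i), Finset.card_univ,
          Fintype.card_fin, nsmul_eq_mul, Nat.cast_sub (by omega), Nat.cast_one]
      rw [Finset.sum_congr rfl fun i _ => inner i]
      simp [Finset.sum_const, mul_comm, mul_assoc]
    rw [e1, e2]
    have hM1 : (M : ℝ) ≠ 0 := by
      have : (2 : ℝ) ≤ (M : ℝ) := by exact_mod_cast hM
      linarith
    have hM2 : (M : ℝ) - 1 ≠ 0 := by
      have : (2 : ℝ) ≤ (M : ℝ) := by exact_mod_cast hM
      linarith
    field_simp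
  rw [step, hAdef, hBdef]
  exact crps_core μ F hF hmom y
end

section
/- Let μ be a probability measure on ℝ with cumulative distribution function F and finite first moment, let X_1, …, X_M be independent random variables each with law μ with M ≥ 2, and let y ∈ ℝ. Then E[ (1/M) Σ_{i=1}^M |X_i − y| − (1/(2M²)) Σ_{i=1}^M Σ_{j=1}^M |X_i − X_j| ] = CRPS(F, y) + (1/(2M)) E|X_1 − X_2|; in particular, the standard discrete CRPS estimator has a positive bias of order 1/M. -/
open MeasureTheory ProbabilityTheory


noncomputable def stp (a s : ℝ) : ℝ := if a ≤ s then 1 else 0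
noncomputable def dfn (a b s : ℝ) : ℝ := stp a s - stp b s

lemma stp_meas : Measurable (fun p : ℝ × ℝ => stp p.1 p.2) := by
  unfold stp
  exact Measurable.ite (measurableSet_le measurable_fst measurable_snd)
    measurable_const measurable_const

lemma dfn_eq_indicator (a b : ℝ) (h : a ≤ b) :
    (fun s => dfn a b s) = Set.indicator (Set.Ico a b) (fun _ => (1:ℝ)) := by
  funext s
  simp only [dfn, stp, Set.indicator, Set.mem_Ico]
  by_cases h1 : a ≤ s
  · by_cases h2 : b ≤ s
    · simp [h1, h2, not_lt.2 h2]
    · simp [h1, h2, lt_of_not_ge h2]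
  · have h2 : ¬ b ≤ s := fun hb => h1 (le_trans h hb)
    simp [h1, h2]

lemma dfn_neg (a b s : ℝ) : dfn a b s = - dfn b a s := by simp [dfn]

lemma dfn_integrable (a b : ℝ) : Integrable (dfn a b) (volume : Measure ℝ) := by
  have key : ∀ u v : ℝ, u ≤ v → Integrable (dfn u v) (volume : Measure ℝ) := by
    intro u v h
    rw [show dfn u v = fun s => dfn u v s from rfl, dfn_eq_indicator u v h]
    exact (integrable_indicator_iff measurableSet_Ico).2
      (integrableOn_const (by simp [Real.volume_Ico]))
  rcases le_total a b with h | h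
  · exact key a b h
  · have : dfn a b = fun s => - dfn b a s := by funext s; exact dfn_neg a b s
    rw [this]
    exact (key b a h).neg

lemma dfn_integral (a b : ℝ) : ∫ s, dfn a b s = b - a := by
  have key : ∀ u v : ℝ, u ≤ v → ∫ s, dfn u v s = v - u := by
    intro u v h
    rw [show (fun s => dfn u v s) = Set.indicator (Set.Ico u v) (fun _ => (1:ℝ)) from
      dfn_eq_indicator u v h, integral_indicator measurableSet_Ico]
    simp [h, Real.volume_Ico, ENNReal.toReal_ofReal (by linarith : (0:ℝ) ≤ v - u)]
  rcases le_total a b with h | h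
  · exact key a b h
  · have : ∫ s, dfn a b s = - ∫ s, dfn b a s := by
      rw [← integral_neg]; congr 1; funext s; exact dfn_neg a b s
    rw [this, key b a h]; ring

lemma stp_mul (a b s : ℝ) : stp a s * stp b s = stp (max a b) s := by
  unfold stp
  by_cases h1 : a ≤ s <;> by_cases h2 : b ≤ s <;>
    simp [h1, h2, max_le_iff]

lemma dd_eq (x x' y : ℝ) :
    (fun s => dfn x y s * dfn x' y s)
      = fun s => dfn (max x x') (max x y) s + dfn y (max x' y) s := by
  funext s
  have h1 := stp_mul x x' s
  have h2 := stp_mul x y s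
  have h3 := stp_mul y x' s
  have h4 := stp_mul y y s
  simp only [dfn]
  rw [max_self] at h4
  rw [max_comm y x'] at h3
  nlinarith [h1, h2, h3, h4]

lemma dd_integrable (x x' y : ℝ) :
    Integrable (fun s => dfn x y s * dfn x' y s) (volume : Measure ℝ) := by
  rw [dd_eq]
  exact (dfn_integrable _ _).add (dfn_integrable _ _)

lemma two_max (a b : ℝ) : 2 * max a b = a + b + |a - b| := by
  rcases le_total a b with h | h
  · rw [max_eq_right h, abs_of_nonpos (by linarith)]; ring
  · rw [max_eq_left h, abs_of_nonneg (by linarith)]; ring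

lemma dd_integral (x x' y : ℝ) :
    ∫ s, dfn x y s * dfn x' y s = (|x - y| + |x' - y| - |x - x'|) / 2 := by
  rw [dd_eq, integral_add (dfn_integrable _ _) (dfn_integrable _ _),
    dfn_integral, dfn_integral]
  have h1 := two_max x x' ; have h2 := two_max x y ; have h3 := two_max x' y
  linarith

lemma abs_dfn (a b s : ℝ) : |dfn a b s| = dfn (min a b) (max a b) s := by
  have key : ∀ u v : ℝ, u ≤ v → 0 ≤ dfn u v s := by
    intro u v h
    have := congrFun (dfn_eq_indicator u v h) s
    rw [this]
    exact Set.indicator_nonneg (fun _ _ => zero_le_one) s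
  rcases le_total a b with h | h
  · rw [min_eq_left h, max_eq_right h, abs_of_nonneg (key a b h)]
  · rw [min_eq_right h, max_eq_left h, dfn_neg a b s,
      abs_neg, abs_of_nonneg (key b a h)]

lemma abs_dfn_integral (a b : ℝ) : ∫ s, |dfn a b s| = |a - b| := by
  have : (fun s => |dfn a b s|) = fun s => dfn (min a b) (max a b) s := by
    funext s; exact abs_dfn a b s
  rw [this, dfn_integral]
  rcases le_total a b with h | h
  · rw [min_eq_left h, max_eq_right h, abs_of_nonpos (by linarith)]; ring
  · rw [min_eq_right h, max_eq_left h, abs_of_nonneg (by linarith)]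

lemma dfn_le_one (a b s : ℝ) : |dfn a b s| ≤ 1 := by
  simp only [dfn, stp]
  by_cases h1 : a ≤ s <;> by_cases h2 : b ≤ s <;> simp [h1, h2]

variable (μ : Measure ℝ) [IsProbabilityMeasure μ]

lemma integrable_abs_sub (y : ℝ) (hmom : Integrable id μ) :
    Integrable (fun x => |x - y|) μ :=
  (hmom.sub (integrable_const y)).abs

lemma integrable_fst (f : ℝ → ℝ) (hf : Integrable f μ) (hm : Measurable f) :
    Integrable (fun p : ℝ × ℝ => f p.1) (μ.prod μ) := by
  have h : Measure.map Prod.fst (μ.prod μ) = μ := by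
    rw [Measure.map_fst_prod]; simp
  exact (integrable_map_measure hm.aestronglyMeasurable measurable_fst.aemeasurable).1
    (by rw [h]; exact hf)

lemma integrable_snd (f : ℝ → ℝ) (hf : Integrable f μ) (hm : Measurable f) :
    Integrable (fun p : ℝ × ℝ => f p.2) (μ.prod μ) := by
  have h : Measure.map Prod.snd (μ.prod μ) = μ := by
    rw [Measure.map_snd_prod]; simp
  exact (integrable_map_measure hm.aestronglyMeasurable measurable_snd.aemeasurable).1
    (by rw [h]; exact hf)

lemma integrable_pair_diff (hmom : Integrable id μ) :
    Integrable (fun p : ℝ × ℝ => |p.1 - p.2|) (μ.prod μ) := by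
  have h1 : Integrable (fun p : ℝ × ℝ => |p.1|) (μ.prod μ) :=
    integrable_fst μ (fun x => |x|) hmom.abs measurable_id.abs
  have h2 : Integrable (fun p : ℝ × ℝ => |p.2|) (μ.prod μ) :=
    integrable_snd μ (fun x => |x|) hmom.abs measurable_id.abs
  refine (h1.add h2).mono ?_ ?_
  · exact (continuous_abs.comp (continuous_fst.sub continuous_snd)).aestronglyMeasurable
  · filter_upwards with p
    simp only [Real.norm_eq_abs, abs_abs]
    calc |p.1 - p.2| ≤ |p.1| + |p.2| := abs_sub p.1 p.2
    _ ≤ |(|p.1| + |p.2|)| := le_abs_self _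

lemma Gmeas (y : ℝ) :
    Measurable (fun q : (ℝ × ℝ) × ℝ => dfn q.1.1 y q.2 * dfn q.1.2 y q.2) := by
  have h1 : Measurable (fun q : (ℝ × ℝ) × ℝ => stp q.1.1 q.2) :=
    stp_meas.comp (measurable_fst.fst.prodMk measurable_snd)
  have h2 : Measurable (fun q : (ℝ × ℝ) × ℝ => stp q.1.2 q.2) :=
    stp_meas.comp (measurable_fst.snd.prodMk measurable_snd)
  have h3 : Measurable (fun q : (ℝ × ℝ) × ℝ => stp y q.2) :=
    stp_meas.comp (measurable_const.prodMk measurable_snd)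
  exact (h1.sub h3).mul (h2.sub h3)

lemma G_integrable (y : ℝ) (hmom : Integrable id μ) :
    Integrable (fun q : (ℝ × ℝ) × ℝ => dfn q.1.1 y q.2 * dfn q.1.2 y q.2)
      ((μ.prod μ).prod (volume : Measure ℝ)) := by
  refine (integrable_prod_iff (Gmeas y).aestronglyMeasurable).2 ⟨?_, ?_⟩
  · filter_upwards with p; exact dd_integrable p.1 p.2 y
  · refine (integrable_fst μ (fun x => |x - y|) (integrable_abs_sub μ y hmom)
      ((measurable_id.sub measurable_const).abs)).mono ?_ ?_
    · exact (Gmeas y).norm.aestronglyMeasurable.integral_prod_right'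
    · filter_upwards with p
      rw [Real.norm_eq_abs, Real.norm_eq_abs,
        abs_of_nonneg (integral_nonneg (fun s => norm_nonneg _)), abs_abs]
      calc ∫ s, ‖dfn p.1 y s * dfn p.2 y s‖
          ≤ ∫ s, |dfn p.1 y s| := by
            refine integral_mono (dd_integrable p.1 p.2 y).norm
              (dfn_integrable p.1 y).abs ?_
            intro s
            show ‖dfn p.1 y s * dfn p.2 y s‖ ≤ |dfn p.1 y s|
            rw [Real.norm_eq_abs, abs_mul]
            exact mul_le_of_le_one_right (abs_nonneg _) (dfn_le_one _ _ _)
        _ = |p.1 - y| := abs_dfn_integral p.1 y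

lemma stp_eq_indicator (s : ℝ) :
    (fun x => stp x s) = Set.indicator (Set.Iic s) (fun _ => (1:ℝ)) := by
  funext x
  simp only [stp, Set.indicator, Set.mem_Iic]

lemma crps_eq (y : ℝ) (hmom : Integrable id μ) :
    ∫ s : ℝ, ((μ (Set.Iic s)).toReal - stp y s) ^ 2
      = (∫ x, |x - y| ∂μ) - (∫ p, |p.1 - p.2| ∂(μ.prod μ)) / 2 := by
  have hstp_int : ∀ s : ℝ, ∫ x, stp x s ∂μ = (μ (Set.Iic s)).toReal := by
    intro s
    rw [stp_eq_indicator s, integral_indicator_const (1:ℝ) measurableSet_Iic,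
      smul_eq_mul, mul_one]
    rfl
  have hrepr : ∀ s : ℝ, (μ (Set.Iic s)).toReal - stp y s = ∫ x, dfn x y s ∂μ := by
    intro s
    have hint1 : Integrable (fun x => stp x s) μ := by
      rw [stp_eq_indicator s]
      exact (integrable_indicator_iff measurableSet_Iic).2
        (integrableOn_const (measure_lt_top μ _).ne)
    rw [show (fun x => dfn x y s) = fun x => stp x s - stp y s from rfl,
      integral_sub hint1 (integrable_const _), hstp_int s, integral_const]
    simp
  have hmapfst : Measure.map Prod.fst (μ.prod μ) = μ := by
    rw [Measure.map_fst_prod]; simp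
  have hmapsnd : Measure.map Prod.snd (μ.prod μ) = μ := by
    rw [Measure.map_snd_prod]; simp
  have hm : Measurable (fun x : ℝ => |x - y|) := (measurable_id.sub measurable_const).abs
  have hA : ∫ p, |p.1 - y| ∂(μ.prod μ) = ∫ x, |x - y| ∂μ := by
    conv_rhs => rw [← hmapfst]
    rw [integral_map measurable_fst.aemeasurable hm.aestronglyMeasurable]
  have hB : ∫ p, |p.2 - y| ∂(μ.prod μ) = ∫ x, |x - y| ∂μ := by
    conv_rhs => rw [← hmapsnd]
    rw [integral_map measurable_snd.aemeasurable hm.aestronglyMeasurable]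
  have hiA : Integrable (fun p : ℝ × ℝ => |p.1 - y|) (μ.prod μ) :=
    integrable_fst μ (fun x => |x - y|) (integrable_abs_sub μ y hmom)
      (measurable_id.sub measurable_const).abs
  have hiB : Integrable (fun p : ℝ × ℝ => |p.2 - y|) (μ.prod μ) :=
    integrable_snd μ (fun x => |x - y|) (integrable_abs_sub μ y hmom)
      (measurable_id.sub measurable_const).abs
  have hiC := integrable_pair_diff μ hmom
  calc ∫ s : ℝ, ((μ (Set.Iic s)).toReal - stp y s) ^ 2
      = ∫ s : ℝ, ∫ p, dfn p.1 y s * dfn p.2 y s ∂(μ.prod μ) := by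
        congr 1; funext s
        rw [hrepr s, sq, ← integral_prod_mul]
    _ = ∫ p, (∫ s : ℝ, dfn p.1 y s * dfn p.2 y s) ∂(μ.prod μ) :=
        (integral_integral_swap (G_integrable μ y hmom)).symm
    _ = ∫ p, (|p.1 - y| + |p.2 - y| - |p.1 - p.2|) / 2 ∂(μ.prod μ) := by
        congr 1; funext p; exact dd_integral p.1 p.2 y
    _ = (∫ x, |x - y| ∂μ) - (∫ p, |p.1 - p.2| ∂(μ.prod μ)) / 2 := by
        have hiAB : Integrable (fun p : ℝ × ℝ => |p.1 - y| + |p.2 - y|) (μ.prod μ) :=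
          hiA.add hiB
        rw [integral_div, integral_sub hiAB hiC, integral_add hiA hiB, hA, hB]
        ring

/-- The standard discrete CRPS estimator has a positive bias of order `1/M`: for
`X₁, …, X_M` i.i.d. with law `μ` (with CDF `F` and finite first moment), `M ≥ 2`,
and `y ∈ ℝ`,
`E[(1/M) Σᵢ |Xᵢ − y| − (1/(2M²)) Σᵢ Σⱼ |Xᵢ − Xⱼ|] = CRPS(F, y) + (1/(2M)) E|X₁ − X₂|`. -/
theorem discrete_crps_estimator_bias
    {Ω : Type*} [MeasureSpace Ω] [IsProbabilityMeasure (ℙ : Measure Ω)]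
    (μ : Measure ℝ) [IsProbabilityMeasure μ]
    (F : ℝ → ℝ) (hF : ∀ s, F s = (μ (Set.Iic s)).toReal)
    (hmom : Integrable id μ)
    (M : ℕ) (hM : 2 ≤ M)
    (X : Fin M → Ω → ℝ) (hXm : ∀ i, Measurable (X i))
    (hindep : iIndepFun X ℙ)
    (hlaw : ∀ i, Measure.map (X i) ℙ = μ)
    (y : ℝ) :
    (∫ ω, ((1 / M) * ∑ i, |X i ω - y|
      - (1 / (2 * (M : ℝ) ^ 2)) * ∑ i, ∑ j, |X i ω - X j ω|))
      = (∫ s : ℝ, (F s - (if y ≤ s then (1 : ℝ) else 0)) ^ 2)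
        + (1 / (2 * (M : ℝ)))
            * ∫ ω, |X (⟨0, by omega⟩ : Fin M) ω - X (⟨1, by omega⟩ : Fin M) ω| := by
  set c1 : ℝ := ∫ x, |x - y| ∂μ with hc1
  set c2 : ℝ := ∫ p : ℝ × ℝ, |p.1 - p.2| ∂(μ.prod μ) with hc2
  have hm : Measurable (fun x : ℝ => |x - y|) := (measurable_id.sub measurable_const).abs
  have hm2 : Measurable (fun p : ℝ × ℝ => |p.1 - p.2|) :=
    (measurable_fst.sub measurable_snd).abs
  -- single-variable expectations
  have hEi : ∀ i, ∫ ω, |X i ω - y| = c1 := by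
    intro i
    calc ∫ ω, |X i ω - y|
        = ∫ x, |x - y| ∂(Measure.map (X i) ℙ) :=
          (integral_map (hXm i).aemeasurable hm.aestronglyMeasurable).symm
      _ = c1 := by rw [hlaw i]
  have hInti : ∀ i, Integrable (fun ω => |X i ω - y|) ℙ := by
    intro i
    have := (integrable_map_measure hm.aestronglyMeasurable (hXm i).aemeasurable).1
      (by rw [hlaw i]; exact integrable_abs_sub μ y hmom)
    exact this
  -- pairwise expectations
  have hpair : ∀ i j, i ≠ j →
      Measure.map (fun ω => (X i ω, X j ω)) ℙ = μ.prod μ := by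
    intro i j hij
    have hIF : IndepFun (X i) (X j) ℙ := hindep.indepFun hij
    rw [(indepFun_iff_map_prod_eq_prod_map_map (hXm i).aemeasurable
      (hXm j).aemeasurable).1 hIF, hlaw i, hlaw j]
  have hEij : ∀ i j, i ≠ j → ∫ ω, |X i ω - X j ω| = c2 := by
    intro i j hij
    calc ∫ ω, |X i ω - X j ω|
        = ∫ p : ℝ × ℝ, |p.1 - p.2| ∂(Measure.map (fun ω => (X i ω, X j ω)) ℙ) :=
          (integral_map ((hXm i).prodMk (hXm j)).aemeasurable
            hm2.aestronglyMeasurable).symm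
      _ = c2 := by rw [hpair i j hij]
  have hIntij : ∀ i j, Integrable (fun ω => |X i ω - X j ω|) ℙ := by
    intro i j
    by_cases hij : i = j
    · subst hij
      simp only [sub_self, abs_zero]
      exact integrable_const 0
    · have := (integrable_map_measure hm2.aestronglyMeasurable
        ((hXm i).prodMk (hXm j)).aemeasurable).1
        (by rw [hpair i j hij]; exact integrable_pair_diff μ hmom)
      exact this
  -- integrability of the two sums
  have hIntA : Integrable (fun ω => (1 / (M : ℝ)) * ∑ i, |X i ω - y|) ℙ := by
    exact (integrable_finset_sum Finset.univ (fun i _ => hInti i)).const_mul _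
  have hIntB : Integrable
      (fun ω => (1 / (2 * (M : ℝ) ^ 2)) * ∑ i, ∑ j, |X i ω - X j ω|) ℙ := by
    refine Integrable.const_mul ?_ _
    exact integrable_finset_sum Finset.univ
      (fun i _ => integrable_finset_sum Finset.univ (fun j _ => hIntij i j))
  -- compute the LHS
  have hMpos : (0:ℝ) < M := by positivity
  have hMne : (M:ℝ) ≠ 0 := ne_of_gt hMpos
  have hLHS : (∫ ω, ((1 / M) * ∑ i, |X i ω - y|
      - (1 / (2 * (M : ℝ) ^ 2)) * ∑ i, ∑ j, |X i ω - X j ω|))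
      = (1 / (M : ℝ)) * ((M : ℝ) * c1)
        - (1 / (2 * (M : ℝ) ^ 2)) * ((M : ℝ) * ((M : ℝ) * c2 - c2)) := by
    rw [integral_sub hIntA hIntB, integral_const_mul, integral_const_mul,
      integral_finset_sum Finset.univ (fun i _ => hInti i),
      integral_finset_sum Finset.univ
        (fun i _ => integrable_finset_sum Finset.univ (fun j _ => hIntij i j))]
    congr 1
    · congr 1
      calc ∑ i : Fin M, ∫ ω, |X i ω - y| = ∑ _i : Fin M, c1 := by
            exact Finset.sum_congr rfl (fun i _ => hEi i)
        _ = (M : ℝ) * c1 := by simp [Finset.sum_const, mul_comm]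
    · congr 1
      have hrow : ∀ i : Fin M,
          (∫ ω, ∑ j, |X i ω - X j ω|) = (M : ℝ) * c2 - c2 := by
        intro i
        rw [integral_finset_sum Finset.univ (fun j _ => hIntij i j)]
        have h1 : (∑ j, ∫ ω, |X i ω - X j ω|)
            = ∑ j : Fin M, (c2 - if i = j then c2 else 0) := by
          refine Finset.sum_congr rfl (fun j _ => ?_)
          by_cases hij : i = j
          · subst hij; simp
          · rw [hEij i j hij]; simp [hij]
        rw [h1, Finset.sum_sub_distrib, Finset.sum_ite_eq]
        simp [Finset.sum_const, mul_comm]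
      calc (∑ i : Fin M, ∫ ω, ∑ j, |X i ω - X j ω|)
          = ∑ _i : Fin M, ((M : ℝ) * c2 - c2) :=
            Finset.sum_congr rfl (fun i _ => hrow i)
        _ = (M : ℝ) * ((M : ℝ) * c2 - c2) := by simp [Finset.sum_const, mul_comm]; ring
  -- compute the RHS pieces
  have hCRPS : (∫ s : ℝ, (F s - (if y ≤ s then (1 : ℝ) else 0)) ^ 2) = c1 - c2 / 2 := by
    have : (fun s : ℝ => (F s - (if y ≤ s then (1 : ℝ) else 0)) ^ 2)
        = fun s : ℝ => ((μ (Set.Iic s)).toReal - stp y s) ^ 2 := by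
      funext s; rw [hF s]; rfl
    rw [this, crps_eq μ y hmom]
  have h01 : (⟨0, by omega⟩ : Fin M) ≠ (⟨1, by omega⟩ : Fin M) := by
    simp [Fin.ext_iff]
  have hlast : (∫ ω, |X (⟨0, by omega⟩ : Fin M) ω - X (⟨1, by omega⟩ : Fin M) ω|) = c2 :=
    hEij _ _ h01
  rw [hLHS, hCRPS, hlast]
  field_simp
  ring
end

section
/- Let μ and ν be probability measures on ℝ with finite first moments and cumulative distribution functions F and G respectively. Then ∫ℝ CRPS(F, y) dν(y) − ∫ℝ CRPS(G, y) dν(y) = ∫ℝ (F(s) − G(s))² ds. -/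
open MeasureTheory Set

lemma crps_aux_iic (μ : Measure ℝ) [IsProbabilityMeasure μ] (hμ : Integrable id μ) (a : ℝ) :
    IntegrableOn (fun s => (μ (Set.Iic s)).toReal) (Set.Iic a) volume := by
  have hmono : Monotone fun s => (μ (Set.Iic s)).toReal := fun x y hxy =>
    ENNReal.toReal_mono (measure_ne_top μ _) (measure_mono (Iic_subset_Iic.2 hxy))
  refine ⟨(hmono.measurable).aestronglyMeasurable, ?_⟩
  have h1 : ∀ s : ℝ, (‖(μ (Set.Iic s)).toReal‖₊ : ENNReal) = μ (Set.Iic s) := fun s => by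
    rw [← enorm_eq_nnnorm, Real.enorm_eq_ofReal ENNReal.toReal_nonneg, ENNReal.ofReal_toReal (measure_ne_top μ _)]
  rw [HasFiniteIntegral]
  simp_rw [enorm_eq_nnnorm, h1]
  have key : ∫⁻ s in Set.Iic a, μ (Set.Iic s) ∂volume ≤ ENNReal.ofReal |a| + ∫⁻ x, (‖x‖₊ : ENNReal) ∂μ := by
    have hmeas : Measurable (Function.uncurry fun (s x : ℝ) =>
        ({p : ℝ × ℝ | p.2 ≤ p.1}.indicator (1 : ℝ × ℝ → ENNReal) (s, x))) := by
      have : MeasurableSet {p : ℝ × ℝ | p.2 ≤ p.1} := measurableSet_le measurable_snd measurable_fst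
      exact (measurable_const.indicator this)
    calc ∫⁻ s in Set.Iic a, μ (Set.Iic s) ∂volume
        = ∫⁻ s in Set.Iic a, ∫⁻ x, {p : ℝ × ℝ | p.2 ≤ p.1}.indicator (1 : ℝ × ℝ → ENNReal) (s, x) ∂μ := by
          refine lintegral_congr fun s => ?_
          rw [show (∫⁻ x, {p : ℝ × ℝ | p.2 ≤ p.1}.indicator (1 : ℝ × ℝ → ENNReal) (s, x) ∂μ)
              = ∫⁻ x, (Set.Iic s).indicator 1 x ∂μ from lintegral_congr fun x => by
                simp [Set.indicator_apply, Set.mem_Iic]]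
          rw [lintegral_indicator_one measurableSet_Iic]
      _ = ∫⁻ x, ∫⁻ s in Set.Iic a, {p : ℝ × ℝ | p.2 ≤ p.1}.indicator (1 : ℝ × ℝ → ENNReal) (s, x) ∂volume ∂μ :=
          lintegral_lintegral_swap hmeas.aemeasurable
      _ ≤ ∫⁻ x, (ENNReal.ofReal |a| + (‖x‖₊ : ENNReal)) ∂μ := by
          refine lintegral_mono fun x => ?_
          have : (∫⁻ s in Set.Iic a, {p : ℝ × ℝ | p.2 ≤ p.1}.indicator (1 : ℝ × ℝ → ENNReal) (s, x) ∂volume)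
              = volume (Set.Ici x ∩ Set.Iic a) := by
            rw [show (fun s => ({p : ℝ × ℝ | p.2 ≤ p.1}.indicator (1 : ℝ × ℝ → ENNReal) (s, x) : ENNReal))
                = fun s => (Set.Ici x).indicator 1 s from funext fun s => by
                  simp [Set.indicator_apply, Set.mem_Ici]]
            rw [lintegral_indicator_one measurableSet_Ici,
              Measure.restrict_apply measurableSet_Ici]
          rw [this, Set.Ici_inter_Iic, Real.volume_Icc]
          calc ENNReal.ofReal (a - x) ≤ ENNReal.ofReal (|a| + |x|) :=
                ENNReal.ofReal_le_ofReal (by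
                  have := abs_nonneg x; have := le_abs_self a; have := neg_abs_le x; linarith)
            _ = ENNReal.ofReal |a| + ENNReal.ofReal |x| :=
                ENNReal.ofReal_add (abs_nonneg _) (abs_nonneg _)
            _ = ENNReal.ofReal |a| + ‖x‖₊ := by rw [← enorm_eq_nnnorm, Real.enorm_eq_ofReal_abs]
      _ = ENNReal.ofReal |a| + ∫⁻ x, (‖x‖₊ : ENNReal) ∂μ := by
          rw [lintegral_add_left measurable_const, lintegral_const, measure_univ, mul_one]
  refine lt_of_le_of_lt key (ENNReal.add_lt_top.2 ⟨ENNReal.ofReal_lt_top, ?_⟩)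
  exact hμ.hasFiniteIntegral

lemma crps_aux_ioi (μ : Measure ℝ) [IsProbabilityMeasure μ] (hμ : Integrable id μ) (a : ℝ) :
    IntegrableOn (fun s => (μ (Set.Ioi s)).toReal) (Set.Ici a) volume := by
  have hanti : Antitone fun s => (μ (Set.Ioi s)).toReal := fun x y hxy =>
    ENNReal.toReal_mono (measure_ne_top μ _) (measure_mono (Ioi_subset_Ioi hxy))
  refine ⟨(hanti.measurable).aestronglyMeasurable, ?_⟩
  have h1 : ∀ s : ℝ, (‖(μ (Set.Ioi s)).toReal‖₊ : ENNReal) = μ (Set.Ioi s) := fun s => by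
    rw [← enorm_eq_nnnorm, Real.enorm_eq_ofReal ENNReal.toReal_nonneg, ENNReal.ofReal_toReal (measure_ne_top μ _)]
  rw [HasFiniteIntegral]
  simp_rw [enorm_eq_nnnorm, h1]
  have key : ∫⁻ s in Set.Ici a, μ (Set.Ioi s) ∂volume
      ≤ ENNReal.ofReal |a| + ∫⁻ x, (‖x‖₊ : ENNReal) ∂μ := by
    have hmeas : Measurable (Function.uncurry fun (s x : ℝ) =>
        ({p : ℝ × ℝ | p.1 < p.2}.indicator (1 : ℝ × ℝ → ENNReal) (s, x))) := by
      have : MeasurableSet {p : ℝ × ℝ | p.1 < p.2} :=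
        measurableSet_lt measurable_fst measurable_snd
      exact (measurable_const.indicator this)
    calc ∫⁻ s in Set.Ici a, μ (Set.Ioi s) ∂volume
        = ∫⁻ s in Set.Ici a, ∫⁻ x, {p : ℝ × ℝ | p.1 < p.2}.indicator (1 : ℝ × ℝ → ENNReal) (s, x) ∂μ := by
          refine lintegral_congr fun s => ?_
          rw [show (∫⁻ x, {p : ℝ × ℝ | p.1 < p.2}.indicator (1 : ℝ × ℝ → ENNReal) (s, x) ∂μ)
              = ∫⁻ x, (Set.Ioi s).indicator 1 x ∂μ from lintegral_congr fun x => by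
                simp [Set.indicator_apply, Set.mem_Ioi]]
          rw [lintegral_indicator_one measurableSet_Ioi]
      _ = ∫⁻ x, ∫⁻ s in Set.Ici a, {p : ℝ × ℝ | p.1 < p.2}.indicator (1 : ℝ × ℝ → ENNReal) (s, x) ∂volume ∂μ :=
          lintegral_lintegral_swap hmeas.aemeasurable
      _ ≤ ∫⁻ x, (ENNReal.ofReal |a| + (‖x‖₊ : ENNReal)) ∂μ := by
          refine lintegral_mono fun x => ?_
          have : (∫⁻ s in Set.Ici a, {p : ℝ × ℝ | p.1 < p.2}.indicator (1 : ℝ × ℝ → ENNReal) (s, x) ∂volume)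
              = volume (Set.Iio x ∩ Set.Ici a) := by
            rw [show (fun s => ({p : ℝ × ℝ | p.1 < p.2}.indicator (1 : ℝ × ℝ → ENNReal) (s, x) : ENNReal))
                = fun s => (Set.Iio x).indicator 1 s from funext fun s => by
                  simp [Set.indicator_apply, Set.mem_Iio]]
            rw [lintegral_indicator_one measurableSet_Iio,
              Measure.restrict_apply measurableSet_Iio]
          rw [this, show Set.Iio x ∩ Set.Ici a = Set.Ico a x from by
            ext t; simp [Set.mem_Ico, and_comm], Real.volume_Ico]
          calc ENNReal.ofReal (x - a) ≤ ENNReal.ofReal (|a| + |x|) :=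
                ENNReal.ofReal_le_ofReal (by
                  have := abs_nonneg a; have := le_abs_self x; have := neg_abs_le a; linarith)
            _ = ENNReal.ofReal |a| + ENNReal.ofReal |x| :=
                ENNReal.ofReal_add (abs_nonneg _) (abs_nonneg _)
            _ = ENNReal.ofReal |a| + (‖x‖₊ : ENNReal) := by rw [← enorm_eq_nnnorm, Real.enorm_eq_ofReal_abs]
      _ = ENNReal.ofReal |a| + ∫⁻ x, (‖x‖₊ : ENNReal) ∂μ := by
          rw [lintegral_add_left measurable_const, lintegral_const, measure_univ, mul_one]
  refine lt_of_le_of_lt key (ENNReal.add_lt_top.2 ⟨ENNReal.ofReal_lt_top, ?_⟩)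
  exact hμ.hasFiniteIntegral

section
variable (ρ : Measure ℝ) [IsProbabilityMeasure ρ] (F : ℝ → ℝ)

omit [IsProbabilityMeasure ρ] in
lemma crps_F_nonneg (hF : ∀ s, F s = (ρ (Set.Iic s)).toReal) (s : ℝ) : 0 ≤ F s := by
  rw [hF]; exact ENNReal.toReal_nonneg

lemma crps_F_le_one (hF : ∀ s, F s = (ρ (Set.Iic s)).toReal) (s : ℝ) : F s ≤ 1 := by
  rw [hF]
  exact ENNReal.toReal_le_of_le_ofReal one_pos.le (by simpa using prob_le_one)

lemma crps_one_sub (hF : ∀ s, F s = (ρ (Set.Iic s)).toReal) (s : ℝ) :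
    1 - F s = (ρ (Set.Ioi s)).toReal := by
  have h : ρ (Set.Iic s) + ρ (Set.Ioi s) = 1 := by
    have := measure_add_measure_compl (μ := ρ) (measurableSet_Iic (a := s))
    rwa [Set.compl_Iic, measure_univ] at this
  have h2 : (ρ (Set.Iic s)).toReal + (ρ (Set.Ioi s)).toReal = 1 := by
    rw [← ENNReal.toReal_add (measure_ne_top ρ _) (measure_ne_top ρ _), h]; rfl
  rw [hF]; linarith

/-- the dominating function -/
noncomputable def crpsBound (y : ℝ) : ℝ → ℝ := fun s =>
  (Set.Iic (0:ℝ)).indicator F s + (Set.Ici (0:ℝ)).indicator (fun t => 1 - F t) s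
    + (Set.uIcc 0 y).indicator 1 s

lemma crpsBound_integrable (hρ : Integrable id ρ)
    (hF : ∀ s, F s = (ρ (Set.Iic s)).toReal) (y : ℝ) :
    Integrable (crpsBound F y) volume := by
  have h1 : IntegrableOn F (Set.Iic 0) volume := by
    have := crps_aux_iic ρ hρ 0
    exact this.congr_fun (fun s _ => (hF s).symm) measurableSet_Iic
  have h2 : IntegrableOn (fun t => 1 - F t) (Set.Ici 0) volume := by
    have := crps_aux_ioi ρ hρ 0
    exact this.congr_fun (fun s _ => (crps_one_sub ρ F hF s).symm) measurableSet_Ici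
  have h3 : IntegrableOn (fun _ : ℝ => (1:ℝ)) (Set.uIcc 0 y) volume :=
    integrableOn_const measure_Icc_lt_top.ne
  exact ((h1.integrable_indicator measurableSet_Iic).add
    (h2.integrable_indicator measurableSet_Ici)).add
    (h3.integrable_indicator measurableSet_uIcc)

lemma crps_pointwise_bound (hF : ∀ s, F s = (ρ (Set.Iic s)).toReal) (y s : ℝ) :
    (F s - (if y ≤ s then (1:ℝ) else 0)) ^ 2 ≤ crpsBound F y s := by
  have h0 := crps_F_nonneg ρ F hF s
  have h1 := crps_F_le_one ρ F hF s
  have e1 : 0 ≤ (Set.Iic (0:ℝ)).indicator F s :=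
    Set.indicator_nonneg (fun t _ => crps_F_nonneg ρ F hF t) s
  have e2 : 0 ≤ (Set.Ici (0:ℝ)).indicator (fun t => 1 - F t) s :=
    Set.indicator_nonneg (fun t _ => by linarith [crps_F_le_one ρ F hF t]) s
  have e3 : 0 ≤ (Set.uIcc (0:ℝ) y).indicator (1 : ℝ → ℝ) s :=
    Set.indicator_nonneg (fun _ _ => zero_le_one) s
  unfold crpsBound
  rcases le_or_gt y s with hy | hy
  · rw [if_pos hy]
    rcases le_or_gt 0 s with hs | hs
    · have v2 : (Set.Ici (0:ℝ)).indicator (fun t => 1 - F t) s = 1 - F s :=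
        Set.indicator_of_mem hs _
      nlinarith
    · have hmem : s ∈ Set.uIcc (0:ℝ) y := by
        rw [Set.mem_uIcc]; right; exact ⟨hy, hs.le⟩
      have v3 : (Set.uIcc (0:ℝ) y).indicator (1 : ℝ → ℝ) s = 1 :=
        Set.indicator_of_mem hmem _
      nlinarith
  · rw [if_neg (not_le.2 hy)]
    rcases le_or_gt s 0 with hs | hs
    · have v1 : (Set.Iic (0:ℝ)).indicator F s = F s :=
        Set.indicator_of_mem (show s ∈ Set.Iic (0:ℝ) from hs) F
      nlinarith
    · have hmem : s ∈ Set.uIcc (0:ℝ) y := by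
        rw [Set.mem_uIcc]; left; exact ⟨hs.le, hy.le⟩
      have v3 : (Set.uIcc (0:ℝ) y).indicator (1 : ℝ → ℝ) s = 1 :=
        Set.indicator_of_mem hmem _
      nlinarith

lemma crps_sq_meas (hF : ∀ s, F s = (ρ (Set.Iic s)).toReal) (y : ℝ) :
    Measurable fun s => (F s - (if y ≤ s then (1:ℝ) else 0)) ^ 2 := by
  have hmono : Monotone F := fun x z hxz => by
    rw [hF, hF]
    exact ENNReal.toReal_mono (measure_ne_top ρ _) (measure_mono (Set.Iic_subset_Iic.2 hxz))
  have hFm : Measurable F := hmono.measurable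
  have hχ : Measurable fun s => (if y ≤ s then (1:ℝ) else 0) := by
    have : (fun s => (if y ≤ s then (1:ℝ) else 0)) = (Set.Ici y).indicator 1 := by
      funext s; simp [Set.indicator_apply, Set.mem_Ici]
    rw [this]; exact measurable_const.indicator measurableSet_Ici
  exact (hFm.sub hχ).pow_const 2

lemma crps_sq_integrable (hρ : Integrable id ρ)
    (hF : ∀ s, F s = (ρ (Set.Iic s)).toReal) (y : ℝ) :
    Integrable (fun s => (F s - (if y ≤ s then (1:ℝ) else 0)) ^ 2) volume := by
  refine Integrable.mono' (crpsBound_integrable ρ F hρ hF y)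
    ((crps_sq_meas ρ F hF y).aestronglyMeasurable) (Filter.Eventually.of_forall fun s => ?_)
  rw [Real.norm_of_nonneg (sq_nonneg _)]
  exact crps_pointwise_bound ρ F hF y s

lemma crps_integral_le (hρ : Integrable id ρ)
    (hF : ∀ s, F s = (ρ (Set.Iic s)).toReal) (y : ℝ) :
    (∫ s : ℝ, (F s - (if y ≤ s then (1:ℝ) else 0)) ^ 2)
      ≤ (∫ s : ℝ, ((Set.Iic (0:ℝ)).indicator F s
          + (Set.Ici (0:ℝ)).indicator (fun t => 1 - F t) s)) + |y| := by
  have hb := crpsBound_integrable ρ F hρ hF y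
  have h1 : IntegrableOn F (Set.Iic 0) volume :=
    (crps_aux_iic ρ hρ 0).congr_fun (fun s _ => (hF s).symm) measurableSet_Iic
  have h2 : IntegrableOn (fun t => 1 - F t) (Set.Ici 0) volume :=
    (crps_aux_ioi ρ hρ 0).congr_fun
      (fun s _ => (crps_one_sub ρ F hF s).symm) measurableSet_Ici
  have h3 : IntegrableOn (fun _ : ℝ => (1:ℝ)) (Set.uIcc 0 y) volume :=
    integrableOn_const measure_Icc_lt_top.ne
  have step1 : (∫ s : ℝ, (F s - (if y ≤ s then (1:ℝ) else 0)) ^ 2)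
      ≤ ∫ s : ℝ, crpsBound F y s :=
    integral_mono (crps_sq_integrable ρ F hρ hF y) hb (crps_pointwise_bound ρ F hF y)
  have step2 : (∫ s : ℝ, crpsBound F y s)
      = (∫ s : ℝ, ((Set.Iic (0:ℝ)).indicator F s
          + (Set.Ici (0:ℝ)).indicator (fun t => 1 - F t) s))
        + (volume (Set.uIcc (0:ℝ) y)).toReal := by
    unfold crpsBound
    have hA : Integrable (fun s : ℝ => (Set.Iic (0:ℝ)).indicator F s
        + (Set.Ici (0:ℝ)).indicator (fun t => 1 - F t) s) volume :=
      (h1.integrable_indicator measurableSet_Iic).add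
        (h2.integrable_indicator measurableSet_Ici)
    have hC : Integrable (fun s : ℝ => (Set.uIcc (0:ℝ) y).indicator (1 : ℝ → ℝ) s) volume :=
      h3.integrable_indicator measurableSet_uIcc
    rw [integral_add hA hC]
    congr 1
    exact integral_indicator_one measurableSet_uIcc
  have step3 : (volume (Set.uIcc (0:ℝ) y)).toReal = |y| := by
    rw [Set.uIcc, Real.volume_Icc,
      ENNReal.toReal_ofReal (sub_nonneg.2 (min_le_max (a := (0:ℝ)) (b := y)))]
    rw [show ((0:ℝ) ⊔ y) - ((0:ℝ) ⊓ y) = max 0 y - min 0 y from rfl, max_sub_min_eq_abs]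
    simp
  rw [step2, step3] at step1
  exact step1

end

lemma crps_prod_integrable (ρ ν : Measure ℝ) [IsProbabilityMeasure ρ] [IsProbabilityMeasure ν]
    (hρ : Integrable id ρ) (hν : Integrable id ν)
    (F : ℝ → ℝ) (hF : ∀ s, F s = (ρ (Set.Iic s)).toReal) :
    Integrable (fun p : ℝ × ℝ => (F p.2 - (if p.1 ≤ p.2 then (1:ℝ) else 0)) ^ 2)
      (ν.prod volume) := by
  have hmono : Monotone F := fun x z hxz => by
    rw [hF, hF]
    exact ENNReal.toReal_mono (measure_ne_top ρ _) (measure_mono (Set.Iic_subset_Iic.2 hxz))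
  have hFm : Measurable F := hmono.measurable
  have hχ : Measurable fun p : ℝ × ℝ => (if p.1 ≤ p.2 then (1:ℝ) else 0) := by
    have h : (fun p : ℝ × ℝ => (if p.1 ≤ p.2 then (1:ℝ) else 0))
        = {p : ℝ × ℝ | p.1 ≤ p.2}.indicator 1 := by
      funext p; simp [Set.indicator_apply, Set.mem_setOf_eq]
    rw [h]
    exact measurable_const.indicator (measurableSet_le measurable_fst measurable_snd)
  have hm : Measurable (fun p : ℝ × ℝ => (F p.2 - (if p.1 ≤ p.2 then (1:ℝ) else 0)) ^ 2) :=
    ((hFm.comp measurable_snd).sub hχ).pow_const 2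
  refine (integrable_prod_iff hm.aestronglyMeasurable).2
    ⟨Filter.Eventually.of_forall fun y => crps_sq_integrable ρ F hρ hF y, ?_⟩
  set C := ∫ s : ℝ, ((Set.Iic (0:ℝ)).indicator F s
    + (Set.Ici (0:ℝ)).indicator (fun t => 1 - F t) s) with hC
  have hnorm : ∀ y : ℝ, (fun s => ‖(F s - (if y ≤ s then (1:ℝ) else 0)) ^ 2‖)
      = fun s => (F s - (if y ≤ s then (1:ℝ) else 0)) ^ 2 :=
    fun y => funext fun s => Real.norm_of_nonneg (sq_nonneg _)
  refine Integrable.mono' (g := fun y => C + |y|)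
    ((integrable_const C).add hν.abs)
    (hm.aestronglyMeasurable.norm.integral_prod_right')
    (Filter.Eventually.of_forall fun y => ?_)
  rw [Real.norm_of_nonneg (integral_nonneg fun s => norm_nonneg _)]
  rw [show (∫ s : ℝ, ‖(F s - (if y ≤ s then (1:ℝ) else 0)) ^ 2‖)
      = ∫ s : ℝ, (F s - (if y ≤ s then (1:ℝ) else 0)) ^ 2 from by rw [hnorm y]]
  exact crps_integral_le ρ F hρ hF y

/-- Expected CRPS divergence: for probability measures `μ, ν` on `ℝ` with finite first
moments and CDFs `F, G`, the excess expected score of `F` over `G` under observations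
drawn from `ν` equals `∫ (F(s) − G(s))² ds`. -/
theorem expected_crps_difference_eq_cramer_distance
    (μ ν : Measure ℝ) [IsProbabilityMeasure μ] [IsProbabilityMeasure ν]
    (hμ : Integrable id μ) (hν : Integrable id ν)
    (F G : ℝ → ℝ)
    (hF : ∀ s, F s = (μ (Set.Iic s)).toReal)
    (hG : ∀ s, G s = (ν (Set.Iic s)).toReal) :
    (∫ y, (∫ s : ℝ, (F s - (if y ≤ s then (1 : ℝ) else 0)) ^ 2) ∂ν)
      - (∫ y, (∫ s : ℝ, (G s - (if y ≤ s then (1 : ℝ) else 0)) ^ 2) ∂ν)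
      = ∫ s : ℝ, (F s - G s) ^ 2 := by
  have hf : Integrable (fun p : ℝ × ℝ => (F p.2 - (if p.1 ≤ p.2 then (1:ℝ) else 0)) ^ 2)
      (ν.prod volume) := crps_prod_integrable μ ν hμ hν F hF
  have hg : Integrable (fun p : ℝ × ℝ => (G p.2 - (if p.1 ≤ p.2 then (1:ℝ) else 0)) ^ 2)
      (ν.prod volume) := crps_prod_integrable ν ν hν hν G hG
  have hI : Integrable (fun y => ∫ s : ℝ, (F s - (if y ≤ s then (1:ℝ) else 0)) ^ 2) ν :=
    hf.integral_prod_left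
  have hJ : Integrable (fun y => ∫ s : ℝ, (G s - (if y ≤ s then (1:ℝ) else 0)) ^ 2) ν :=
    hg.integral_prod_left
  rw [← integral_sub hI hJ]
  have step1 : (∫ y, ((∫ s : ℝ, (F s - (if y ≤ s then (1:ℝ) else 0)) ^ 2)
      - (∫ s : ℝ, (G s - (if y ≤ s then (1:ℝ) else 0)) ^ 2)) ∂ν)
      = ∫ y, (∫ s : ℝ, ((F s - (if y ≤ s then (1:ℝ) else 0)) ^ 2
          - (G s - (if y ≤ s then (1:ℝ) else 0)) ^ 2)) ∂ν := by
    refine integral_congr_ae (Filter.Eventually.of_forall fun y => ?_)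
    exact (integral_sub (crps_sq_integrable μ F hμ hF y) (crps_sq_integrable ν G hν hG y)).symm
  rw [step1]
  have hfg : Integrable (Function.uncurry fun y s : ℝ =>
      ((F s - (if y ≤ s then (1:ℝ) else 0)) ^ 2
        - (G s - (if y ≤ s then (1:ℝ) else 0)) ^ 2)) (ν.prod volume) := hf.sub hg
  have hswap := integral_integral_swap (μ := ν) (ν := volume)
    (f := fun y s => ((F s - (if y ≤ s then (1:ℝ) else 0)) ^ 2
      - (G s - (if y ≤ s then (1:ℝ) else 0)) ^ 2)) hfg
  rw [hswap]
  refine integral_congr_ae (Filter.Eventually.of_forall fun s => ?_)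
  have hχint : Integrable (fun y : ℝ => (if y ≤ s then (1:ℝ) else 0)) ν := by
    have h : (fun y : ℝ => (if y ≤ s then (1:ℝ) else 0))
        = (Set.Iic s).indicator (fun _ => (1:ℝ)) := by
      funext y; simp [Set.indicator_apply, Set.mem_Iic]
    rw [h]
    exact (integrable_const (1:ℝ)).indicator measurableSet_Iic
  have hexp : ∀ y : ℝ, ((F s - (if y ≤ s then (1:ℝ) else 0)) ^ 2
      - (G s - (if y ≤ s then (1:ℝ) else 0)) ^ 2)
      = ((F s) ^ 2 - (G s) ^ 2) - (2 * (F s - G s)) * (if y ≤ s then (1:ℝ) else 0) :=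
    fun y => by ring
  simp_rw [hexp]
  rw [integral_sub (integrable_const _) (hχint.const_mul _), integral_const,
    integral_const_mul, probReal_univ]
  have hχval : (∫ y : ℝ, (if y ≤ s then (1:ℝ) else 0) ∂ν) = G s := by
    rw [show (fun y : ℝ => (if y ≤ s then (1:ℝ) else 0))
        = (Set.Iic s).indicator 1 from funext fun y => by
      simp [Set.indicator_apply, Set.mem_Iic]]
    rw [integral_indicator_one measurableSet_Iic, hG]; rfl
  rw [hχval]
  simp only [ENNReal.toReal_one, one_smul, smul_eq_mul]
  ring
end

section
/- Let μ and ν be probability measures on ℝ with finite first moments and cumulative distribution functions F and G respectively. Then ∫ℝ CRPS(F, y) dν(y) ≥ ∫ℝ CRPS(G, y) dν(y), with equality if and only if F = G (equivalently, μ = ν); that is, the CRPS is a strictly proper scoring rule. -/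
open MeasureTheory Set
open scoped ENNReal Topology

lemma tail_lintegral (μ : Measure ℝ) [IsProbabilityMeasure μ] (hμ : Integrable id μ) :
    ∫⁻ s, (if s < 0 then μ (Set.Iic s) else μ (Set.Ioi s)) ∂(volume : Measure ℝ) < ⊤ := by
  set f : ℝ → ℝ → ℝ≥0∞ := fun s x => if (s < 0 ∧ x ≤ s) ∨ (0 ≤ s ∧ s < x) then 1 else 0 with hf
  have hS : MeasurableSet {p : ℝ × ℝ | (p.1 < 0 ∧ p.2 ≤ p.1) ∨ (0 ≤ p.1 ∧ p.1 < p.2)} :=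
    MeasurableSet.union
      ((measurableSet_lt measurable_fst measurable_const).inter
        (measurableSet_le measurable_snd measurable_fst))
      ((measurableSet_le measurable_const measurable_fst).inter
        (measurableSet_lt measurable_fst measurable_snd))
  have hfm : Measurable (Function.uncurry f) := by
    have h1 : Function.uncurry f
        = {p : ℝ × ℝ | (p.1 < 0 ∧ p.2 ≤ p.1) ∨ (0 ≤ p.1 ∧ p.1 < p.2)}.indicator
        (fun _ => (1 : ℝ≥0∞)) := by
      ext p
      simp only [Function.uncurry, hf, Set.indicator, mem_setOf_eq]
    rw [h1]
    exact measurable_const.indicator hS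
  have key : ∫⁻ s, (if s < 0 then μ (Set.Iic s) else μ (Set.Ioi s)) ∂volume
      = ∫⁻ s, ∫⁻ x, f s x ∂μ ∂volume := by
    refine lintegral_congr fun s => ?_
    by_cases hs : s < 0
    · have h2 : ∀ x, f s x = (Set.Iic s).indicator (fun _ => (1:ℝ≥0∞)) x := by
        intro x
        simp only [hf, Set.indicator, mem_Iic]
        by_cases hx : x ≤ s <;> simp [hx, hs, not_le.mpr hs, hs.not_ge]
      simp only [h2, lintegral_indicator measurableSet_Iic _, hs, if_pos]
      simp
    · have h2 : ∀ x, f s x = (Set.Ioi s).indicator (fun _ => (1:ℝ≥0∞)) x := by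
        intro x
        have hs' : ¬ (x ≤ s ∧ s < 0) := fun h => hs h.2
        simp only [hf, Set.indicator, mem_Ioi]
        by_cases hx : s < x <;> simp [hx, hs, not_lt.mp hs]
      simp only [h2, lintegral_indicator measurableSet_Ioi _, hs, if_neg]
      simp
  rw [key, lintegral_lintegral_swap hfm.aemeasurable]
  have hsec : ∀ x : ℝ, ∫⁻ s, f s x ∂(volume : Measure ℝ) = ENNReal.ofReal |x| := by
    intro x
    rcases le_total 0 x with hx | hx
    · have h3 : ∀ s, f s x = (Set.Ico 0 x).indicator (fun _ => (1:ℝ≥0∞)) s := by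
        intro s
        simp only [hf, Set.indicator, mem_Ico]
        by_cases h1 : 0 ≤ s ∧ s < x
        · simp [h1]
        · have : ¬ (s < 0 ∧ x ≤ s) := by
            rintro ⟨h2, h4⟩; exact absurd (hx.trans h4) h2.not_ge
          simp [h1, this]
      simp only [h3, lintegral_indicator measurableSet_Ico _]
      simp [Real.volume_Ico, abs_of_nonneg hx]
    · have h3 : ∀ s, f s x = (Set.Ico x 0).indicator (fun _ => (1:ℝ≥0∞)) s := by
        intro s
        have hiff : ((s < 0 ∧ x ≤ s) ∨ (0 ≤ s ∧ s < x)) ↔ (x ≤ s ∧ s < 0) := by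
          constructor
          · rintro (⟨h1, h2⟩ | ⟨h1, h2⟩)
            · exact ⟨h2, h1⟩
            · linarith
          · rintro ⟨h1, h2⟩
            exact Or.inl ⟨h2, h1⟩
        simp only [hf, Set.indicator, mem_Ico, hiff]
      simp only [h3, lintegral_indicator measurableSet_Ico _]
      simp [Real.volume_Ico, abs_of_nonpos hx]
  simp only [hsec]
  have := hμ.hasFiniteIntegral
  rw [hasFiniteIntegral_iff_norm] at this
  simpa [Real.norm_eq_abs] using this

lemma tail_integrable (μ : Measure ℝ) [IsProbabilityMeasure μ] (hμ : Integrable id μ) :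
    Integrable (fun s => if s < 0 then (μ (Set.Iic s)).toReal else (μ (Set.Ioi s)).toReal)
      (volume : Measure ℝ) := by
  have hm1 : Measurable fun s : ℝ => (μ (Set.Iic s)).toReal := by
    apply Monotone.measurable
    intro a b hab
    exact ENNReal.toReal_mono (measure_ne_top μ _) (measure_mono (Iic_subset_Iic.mpr hab))
  have hm2 : Measurable fun s : ℝ => (μ (Set.Ioi s)).toReal := by
    apply Antitone.measurable
    intro a b hab
    exact ENNReal.toReal_mono (measure_ne_top μ _) (measure_mono (Ioi_subset_Ioi hab))
  refine ⟨(Measurable.ite measurableSet_Iio hm1 hm2).aestronglyMeasurable, ?_⟩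
  rw [hasFiniteIntegral_iff_norm]
  have heq : ∀ s : ℝ, ENNReal.ofReal
      ‖if s < 0 then (μ (Set.Iic s)).toReal else (μ (Set.Ioi s)).toReal‖
      = (if s < 0 then μ (Set.Iic s) else μ (Set.Ioi s)) := by
    intro s
    by_cases hs : s < 0 <;>
      simp [hs, Real.norm_eq_abs, abs_of_nonneg ENNReal.toReal_nonneg,
        ENNReal.ofReal_toReal (measure_ne_top μ _)]
  simp only [heq]
  exact tail_lintegral μ hμ

lemma stieltjes_eq_of_ae_eq (f g : StieltjesFunction ℝ) (h : ⇑f =ᵐ[(volume : Measure ℝ)] ⇑g)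
    (x : ℝ) : f x = g x := by
  set E : Set ℝ := {t | f t = g t} with hE
  have hEc : (volume : Measure ℝ) Eᶜ = 0 := h
  have hcl : x ∈ closure (E ∩ Set.Ioi x) := by
    rw [Metric.mem_closure_iff]
    intro ε hε
    have hne : (E ∩ Set.Ioo x (x + ε)).Nonempty := by
      by_contra hcon
      rw [Set.not_nonempty_iff_eq_empty] at hcon
      have hsub : Set.Ioo x (x + ε) ⊆ Eᶜ := by
        intro t ht
        intro htE
        exact absurd (Set.mem_inter htE ht) (hcon ▸ Set.notMem_empty t)
      have : (volume : Measure ℝ) (Set.Ioo x (x + ε)) = 0 :=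
        measure_mono_null hsub hEc
      rw [Real.volume_Ioo] at this
      simp only [ENNReal.ofReal_eq_zero] at this
      linarith
    obtain ⟨t, htE, ht1, ht2⟩ := hne
    refine ⟨t, ⟨htE, ht1⟩, ?_⟩
    rw [Real.dist_eq, abs_of_nonpos (by linarith)]
    linarith
  have hne : (𝓝[E ∩ Set.Ioi x] x).NeBot := mem_closure_iff_nhdsWithin_neBot.mp hcl
  have hle : 𝓝[E ∩ Set.Ioi x] x ≤ 𝓝[Set.Ici x] x :=
    nhdsWithin_mono x (fun t ht => Set.mem_Ici.mpr (le_of_lt ht.2))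
  have hf : Filter.Tendsto f (𝓝[E ∩ Set.Ioi x] x) (𝓝 (f x)) :=
    (f.right_continuous x).mono_left hle
  have hg : Filter.Tendsto g (𝓝[E ∩ Set.Ioi x] x) (𝓝 (g x)) :=
    (g.right_continuous x).mono_left hle
  have heq : ⇑f =ᶠ[𝓝[E ∩ Set.Ioi x] x] ⇑g := by
    filter_upwards [self_mem_nhdsWithin] with t ht
    exact ht.1
  exact tendsto_nhds_unique (hf.congr' heq) hg

lemma inner_int (ν : Measure ℝ) [IsProbabilityMeasure ν] (c s : ℝ) :
    ∫ y, (c - (if y ≤ s then (1:ℝ) else 0))^2 ∂ν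
      = c^2 + (1 - 2*c) * (ν (Set.Iic s)).toReal := by
  have h1 : ∀ y, (c - (if y ≤ s then (1:ℝ) else 0))^2
      = c^2 + (1 - 2*c) * (Set.Iic s).indicator (fun _ => (1:ℝ)) y := by
    intro y
    by_cases hy : y ≤ s <;> simp [Set.indicator, hy] <;> ring
  simp only [h1]
  rw [integral_add (integrable_const _)
    (((integrable_const (1:ℝ)).indicator measurableSet_Iic).const_mul _),
    integral_const_mul, integral_indicator_const (1:ℝ) measurableSet_Iic]
  simp [Measure.real]

lemma cdfR_measurable (μ : Measure ℝ) [IsFiniteMeasure μ] :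
    Measurable fun s : ℝ => (μ (Set.Iic s)).toReal := by
  apply Monotone.measurable
  intro a b hab
  exact ENNReal.toReal_mono (measure_ne_top μ _) (measure_mono (Set.Iic_subset_Iic.mpr hab))

lemma cdfR_Ioi_measurable (μ : Measure ℝ) [IsFiniteMeasure μ] :
    Measurable fun s : ℝ => (μ (Set.Ioi s)).toReal := by
  apply Antitone.measurable
  intro a b hab
  exact ENNReal.toReal_mono (measure_ne_top μ _) (measure_mono (Set.Ioi_subset_Ioi hab))

lemma Ioi_toReal (μ : Measure ℝ) [IsProbabilityMeasure μ] (s : ℝ) :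
    (μ (Set.Ioi s)).toReal = 1 - (μ (Set.Iic s)).toReal := by
  have h : μ (Set.Iic s) + μ (Set.Ioi s) = 1 := by
    rw [← measure_union (Set.Iic_disjoint_Ioi le_rfl) measurableSet_Ioi, Set.Iic_union_Ioi,
      measure_univ]
  have h1 : (μ (Set.Iic s)).toReal + (μ (Set.Ioi s)).toReal = 1 := by
    rw [← ENNReal.toReal_add (measure_ne_top μ _) (measure_ne_top μ _), h, ENNReal.toReal_one]
  linarith

set_option maxHeartbeats 1000000 in
lemma score_eq (μ ν : Measure ℝ) [IsProbabilityMeasure μ] [IsProbabilityMeasure ν]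
    (hμ : Integrable id μ) (hν : Integrable id ν) (F : ℝ → ℝ)
    (hF : ∀ s, F s = (μ (Set.Iic s)).toReal) :
    (∫ y, (∫ s : ℝ, (F s - (if y ≤ s then (1:ℝ) else 0)) ^ 2) ∂ν)
      = ∫ s : ℝ, ((F s)^2 + (1 - 2 * F s) * (ν (Set.Iic s)).toReal) := by
  have hFm : Measurable F := by
    have : F = fun s => (μ (Set.Iic s)).toReal := funext hF
    rw [this]; exact cdfR_measurable μ
  have hF0 : ∀ s, 0 ≤ F s := fun s => (hF s) ▸ ENNReal.toReal_nonneg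
  have hF1 : ∀ s, F s ≤ 1 := by
    intro s
    rw [hF s]
    exact ENNReal.toReal_le_of_le_ofReal zero_le_one (by simp [prob_le_one])
  -- the integrand on the product space
  set H : ℝ → ℝ → ℝ := fun y s => (F s - (if y ≤ s then (1:ℝ) else 0)) ^ 2 with hH
  set t : ℝ → ℝ := fun s => if s < 0 then (μ (Set.Iic s)).toReal else (μ (Set.Ioi s)).toReal
    with ht
  have ht0 : ∀ s, 0 ≤ t s := fun s => by
    by_cases hs : s < 0 <;> simp [ht, hs, ENNReal.toReal_nonneg]
  -- pointwise bound
  have hbd : ∀ y s, |H y s| ≤ t s + (Set.uIcc 0 y).indicator (fun _ => (1:ℝ)) s := by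
    intro y s
    have hFs0 := hF0 s; have hFs1 := hF1 s
    rw [abs_of_nonneg (sq_nonneg _)]
    by_cases hs : s < 0
    · by_cases hy : y ≤ s
      · have hmem : s ∈ Set.uIcc 0 y := by
          rw [Set.mem_uIcc]
          right; exact ⟨hy, hs.le⟩
        have : H y s ≤ 1 := by
          simp only [hH, hy, if_pos]
          nlinarith
        simpa [Set.indicator, hmem] using le_add_of_nonneg_of_le (ht0 s) this
      · have : H y s ≤ t s := by
          simp only [hH, hy, if_neg, not_false_iff, ht, hs, if_pos, sub_zero, ← hF s]
          nlinarith
        exact this.trans (le_add_of_le_of_nonneg le_rfl (Set.indicator_nonneg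
          (fun _ _ => zero_le_one) s))
    · by_cases hy : y ≤ s
      · have : H y s ≤ t s := by
          simp only [hH, hy, if_pos, ht, hs, if_neg, not_false_iff, Ioi_toReal μ s, ← hF s]
          nlinarith
        exact this.trans (le_add_of_le_of_nonneg le_rfl (Set.indicator_nonneg
          (fun _ _ => zero_le_one) s))
      · have hmem : s ∈ Set.uIcc 0 y := by
          rw [Set.mem_uIcc]
          left; exact ⟨not_lt.mp hs, (not_le.mp hy).le⟩
        have : H y s ≤ 1 := by
          simp only [hH, hy, if_neg, not_false_iff, sub_zero]
          nlinarith
        simpa [Set.indicator, hmem] using le_add_of_nonneg_of_le (ht0 s) this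
  -- measurability on the product
  have hHm : Measurable (Function.uncurry H) := by
    apply Measurable.pow_const
    apply Measurable.sub
    · exact hFm.comp measurable_snd
    · exact Measurable.ite (measurableSet_le measurable_fst measurable_snd)
        measurable_const measurable_const
  -- product integrability
  have htint : Integrable t volume := tail_integrable μ hμ
  have hHint : Integrable (Function.uncurry H) (ν.prod volume) := by
    refine ⟨hHm.aestronglyMeasurable, ?_⟩
    rw [hasFiniteIntegral_iff_norm]
    rw [lintegral_prod _ (by
      exact (hHm.norm.ennreal_ofReal).aemeasurable)]
    set C : ℝ≥0∞ := ∫⁻ s, ENNReal.ofReal (t s) ∂(volume : Measure ℝ) with hC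
    have hCfin : C < ⊤ := by
      have := htint.hasFiniteIntegral
      rw [hasFiniteIntegral_iff_norm] at this
      have heq : ∫⁻ s, ENNReal.ofReal (t s) ∂(volume : Measure ℝ)
          = ∫⁻ s, ENNReal.ofReal ‖t s‖ ∂(volume : Measure ℝ) :=
        lintegral_congr fun s => by rw [Real.norm_eq_abs, abs_of_nonneg (ht0 s)]
      rw [hC, heq]
      exact this
    calc ∫⁻ y, ∫⁻ s, ENNReal.ofReal ‖H y s‖ ∂(volume : Measure ℝ) ∂ν
        ≤ ∫⁻ y, (C + ENNReal.ofReal |y|) ∂ν := by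
          refine lintegral_mono fun y => ?_
          calc ∫⁻ s, ENNReal.ofReal ‖H y s‖ ∂(volume : Measure ℝ)
              ≤ ∫⁻ s, (ENNReal.ofReal (t s)
                  + (Set.uIcc 0 y).indicator (fun _ => (1:ℝ≥0∞)) s) ∂volume := by
                refine lintegral_mono fun s => ?_
                rw [Real.norm_eq_abs]
                calc ENNReal.ofReal |H y s|
                    ≤ ENNReal.ofReal (t s + (Set.uIcc 0 y).indicator (fun _ => (1:ℝ)) s) :=
                      ENNReal.ofReal_le_ofReal (hbd y s)
                  _ = ENNReal.ofReal (t s)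
                      + ENNReal.ofReal ((Set.uIcc 0 y).indicator (fun _ => (1:ℝ)) s) :=
                      ENNReal.ofReal_add (ht0 s) (Set.indicator_nonneg
                        (fun _ _ => zero_le_one) s)
                  _ = ENNReal.ofReal (t s)
                      + (Set.uIcc 0 y).indicator (fun _ => (1:ℝ≥0∞)) s := by
                      congr 1
                      by_cases hmem : s ∈ Set.uIcc 0 y <;> simp [Set.indicator, hmem]
            _ = C + ENNReal.ofReal |y| := by
                have htm : Measurable fun s : ℝ => ENNReal.ofReal (t s) :=
                  (Measurable.ite measurableSet_Iio (cdfR_measurable μ)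
                    (cdfR_Ioi_measurable μ)).ennreal_ofReal
                rw [lintegral_add_left htm]
                congr 1
                rw [lintegral_indicator measurableSet_uIcc _]
                simp only [lintegral_const, Measure.restrict_apply MeasurableSet.univ,
                  Set.univ_inter, one_mul]
                rw [Set.uIcc, Real.volume_Icc]
                congr 1
                rcases le_total 0 y with hy | hy
                · simp [abs_of_nonneg hy, max_eq_right hy, min_eq_left hy]
                · simp [abs_of_nonpos hy, max_eq_left hy, min_eq_right hy]
      _ = C * 1 + ∫⁻ y, ENNReal.ofReal |y| ∂ν := by
          rw [lintegral_add_left measurable_const]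
          simp
      _ < ⊤ := by
          have hνfin : ∫⁻ y, ENNReal.ofReal |y| ∂ν < ⊤ := by
            have := hν.hasFiniteIntegral
            rw [hasFiniteIntegral_iff_norm] at this
            simpa [Real.norm_eq_abs] using this
          exact ENNReal.add_lt_top.mpr ⟨by simpa using hCfin, hνfin⟩
  -- swap and compute
  calc (∫ y, (∫ s : ℝ, H y s) ∂ν) = ∫ s : ℝ, (∫ y, H y s ∂ν) :=
        integral_integral_swap hHint
    _ = ∫ s : ℝ, ((F s)^2 + (1 - 2 * F s) * (ν (Set.Iic s)).toReal) := by
        refine integral_congr_ae (Filter.EventuallyEq.of_eq (funext fun s => ?_))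
        exact inner_int ν (F s) s

/-- The CRPS is a strictly proper scoring rule: for probability measures `μ, ν` on `ℝ`
with finite first moments and CDFs `F, G`, the expected score of `F` under observations
drawn from `ν` is at least that of `G`, with equality iff `F = G` (equivalently `μ = ν`). -/
theorem crps_strictly_proper
    (μ ν : Measure ℝ) [IsProbabilityMeasure μ] [IsProbabilityMeasure ν]
    (hμ : Integrable id μ) (hν : Integrable id ν)
    (F G : ℝ → ℝ)
    (hF : ∀ s, F s = (μ (Set.Iic s)).toReal)
    (hG : ∀ s, G s = (ν (Set.Iic s)).toReal) :
    (∫ y, (∫ s : ℝ, (G s - (if y ≤ s then (1 : ℝ) else 0)) ^ 2) ∂ν)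
      ≤ (∫ y, (∫ s : ℝ, (F s - (if y ≤ s then (1 : ℝ) else 0)) ^ 2) ∂ν) ∧
    ((∫ y, (∫ s : ℝ, (F s - (if y ≤ s then (1 : ℝ) else 0)) ^ 2) ∂ν)
        = (∫ y, (∫ s : ℝ, (G s - (if y ≤ s then (1 : ℝ) else 0)) ^ 2) ∂ν)
      ↔ F = G) ∧
    (F = G ↔ μ = ν) := by
  have hF0 : ∀ s, 0 ≤ F s := fun s => (hF s) ▸ ENNReal.toReal_nonneg
  have hG0 : ∀ s, 0 ≤ G s := fun s => (hG s) ▸ ENNReal.toReal_nonneg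
  have hF1 : ∀ s, F s ≤ 1 := fun s => (hF s) ▸
    ENNReal.toReal_le_of_le_ofReal zero_le_one (by simp [prob_le_one])
  have hG1 : ∀ s, G s ≤ 1 := fun s => (hG s) ▸
    ENNReal.toReal_le_of_le_ofReal zero_le_one (by simp [prob_le_one])
  have hFm : Measurable F := by
    have : F = fun s => (μ (Set.Iic s)).toReal := funext hF
    rw [this]; exact cdfR_measurable μ
  have hGm : Measurable G := by
    have : G = fun s => (ν (Set.Iic s)).toReal := funext hG
    rw [this]; exact cdfR_measurable ν
  set ψF : ℝ → ℝ := fun s => (F s)^2 + (1 - 2 * F s) * G s with hψFdef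
  set ψG : ℝ → ℝ := fun s => (G s)^2 + (1 - 2 * G s) * G s with hψGdef
  have hIF : (∫ y, (∫ s : ℝ, (F s - (if y ≤ s then (1 : ℝ) else 0)) ^ 2) ∂ν)
      = ∫ s : ℝ, ψF s := (score_eq μ ν hμ hν F hF).trans (by simp only [hψFdef, ← hG])
  have hIG : (∫ y, (∫ s : ℝ, (G s - (if y ≤ s then (1 : ℝ) else 0)) ^ 2) ∂ν)
      = ∫ s : ℝ, ψG s := (score_eq ν ν hν hν G hG).trans (by simp only [hψGdef, ← hG])
  -- integrability of ψF, ψG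
  set t : Measure ℝ → ℝ → ℝ :=
    fun m s => if s < 0 then (m (Set.Iic s)).toReal else (m (Set.Ioi s)).toReal with htdef
  have ht0 : ∀ (m : Measure ℝ) (s : ℝ), 0 ≤ t m s := fun m s => by
    by_cases hs : s < 0 <;> simp [htdef, hs, ENNReal.toReal_nonneg]
  have hψbd : ∀ s ψ, (ψ = ψF ∨ ψ = ψG) → |ψ s| ≤ t μ s + t ν s + t ν s := by
    intro s ψ hψ
    have ha0 := hF0 s; have ha1 := hF1 s; have hb0 := hG0 s; have hb1 := hG1 s
    have htμ : t μ s = if s < 0 then F s else 1 - F s := by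
      by_cases hs : s < 0 <;> simp [htdef, hs, Ioi_toReal μ s, ← hF s]
    have htν : t ν s = if s < 0 then G s else 1 - G s := by
      by_cases hs : s < 0 <;> simp [htdef, hs, Ioi_toReal ν s, ← hG s]
    rcases hψ with rfl | rfl
    · have hpos : 0 ≤ ψF s := by
        simp only [hψFdef]
        nlinarith [sq_nonneg (F s - G s), mul_nonneg hb0 (sub_nonneg.mpr hb1)]
      rw [abs_of_nonneg hpos]
      by_cases hs : s < 0
      · simp only [htμ, htν, hs, if_pos, hψFdef]
        nlinarith
      · simp only [htμ, htν, hs, if_neg, not_false_iff, hψFdef]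
        nlinarith [mul_nonneg (sub_nonneg.mpr ha1) (sub_nonneg.mpr hb1),
          mul_nonneg (sub_nonneg.mpr ha1) hb0, mul_nonneg ha0 hb0]
    · have hpos : 0 ≤ ψG s := by
        simp only [hψGdef]
        nlinarith [mul_nonneg hb0 (sub_nonneg.mpr hb1)]
      rw [abs_of_nonneg hpos]
      by_cases hs : s < 0
      · simp only [htμ, htν, hs, if_pos, hψGdef]
        nlinarith
      · simp only [htμ, htν, hs, if_neg, not_false_iff, hψGdef]
        nlinarith [mul_nonneg (sub_nonneg.mpr hb1) hb0]
  have htint : Integrable (fun s => t μ s + t ν s + t ν s) volume :=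
    ((tail_integrable μ hμ).add (tail_integrable ν hν)).add (tail_integrable ν hν)
  have hψint : ∀ ψ : ℝ → ℝ, Measurable ψ → (ψ = ψF ∨ ψ = ψG) → Integrable ψ volume := by
    intro ψ hm hψ
    refine htint.mono hm.aestronglyMeasurable (Filter.Eventually.of_forall fun s => ?_)
    rw [Real.norm_eq_abs, Real.norm_eq_abs,
      abs_of_nonneg (add_nonneg (add_nonneg (ht0 μ s) (ht0 ν s)) (ht0 ν s))]
    exact hψbd s ψ hψ
  have hψFm : Measurable ψF :=
    (hFm.pow_const 2).add ((measurable_const.sub (hFm.const_mul 2)).mul hGm)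
  have hψGm : Measurable ψG :=
    (hGm.pow_const 2).add ((measurable_const.sub (hGm.const_mul 2)).mul hGm)
  have hψFint : Integrable ψF volume := hψint ψF hψFm (Or.inl rfl)
  have hψGint : Integrable ψG volume := hψint ψG hψGm (Or.inr rfl)
  have hkey : (∫ s : ℝ, ψF s) - (∫ s : ℝ, ψG s) = ∫ s : ℝ, (F s - G s)^2 := by
    rw [← integral_sub hψFint hψGint]
    refine integral_congr_ae (Filter.EventuallyEq.of_eq (funext fun s => ?_))
    simp only [hψFdef, hψGdef]
    ring
  have hnn : 0 ≤ ∫ s : ℝ, (F s - G s)^2 := integral_nonneg fun s => sq_nonneg _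
  have hFG_of_eq : (∫ s : ℝ, (F s - G s)^2) = 0 → F = G := by
    intro h0
    have hint : Integrable (fun s : ℝ => (F s - G s)^2) volume := by
      refine (hψFint.sub hψGint).congr (Filter.EventuallyEq.of_eq (funext fun s => ?_))
      simp only [Pi.sub_apply, hψFdef, hψGdef]
      ring
    have hae := (integral_eq_zero_iff_of_nonneg (fun s => sq_nonneg _) hint).mp h0
    have hFc : F = ⇑(ProbabilityTheory.cdf μ) :=
      funext fun s => (hF s).trans (ProbabilityTheory.cdf_eq_real μ s).symm
    have hGc : G = ⇑(ProbabilityTheory.cdf ν) :=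
      funext fun s => (hG s).trans (ProbabilityTheory.cdf_eq_real ν s).symm
    have haecdf : ⇑(ProbabilityTheory.cdf μ) =ᵐ[volume] ⇑(ProbabilityTheory.cdf ν) := by
      rw [← hFc, ← hGc]
      filter_upwards [hae] with s hs
      have hs' : (F s - G s)^2 = 0 := hs
      exact sub_eq_zero.mp (pow_eq_zero_iff two_ne_zero |>.mp hs')
    rw [hFc, hGc]
    exact funext fun x =>
      stieltjes_eq_of_ae_eq (ProbabilityTheory.cdf μ) (ProbabilityTheory.cdf ν) haecdf x
  refine ⟨?_, ?_, ?_⟩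
  · rw [hIF, hIG]
    linarith
  · constructor
    · intro h
      apply hFG_of_eq
      rw [hIF, hIG] at h
      linarith
    · intro h
      rw [h]
  · constructor
    · intro h
      refine MeasureTheory.Measure.ext_of_Iic μ ν fun a => ?_
      have h2 : F a = G a := congrFun h a
      rw [hF, hG] at h2
      exact (ENNReal.toReal_eq_toReal_iff' (measure_ne_top μ _) (measure_ne_top ν _)).mp h2
    · intro h
      funext s
      rw [hF, hG, h]
end

section
/- Let x_1, …, x_M, y be independent identically distributed square-integrable real random variables with common mean and common variance σ² > 0, with M ≥ 1, and let x̄ = (1/M) Σ_j x_j. Then E[ (1/M) Σ_{i=1}^M (x_i − x̄)² ] / E[ (x̄ − y)² ] = (M − 1)/(M + 1). -/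
open MeasureTheory ProbabilityTheory

section Aux
variable {Ω : Type*} [MeasureSpace Ω] [IsProbabilityMeasure (ℙ : Measure Ω)]

lemma my_key {N : ℕ} {z : Fin N → Ω → ℝ}
    (hindep : iIndepFun z ℙ)
    (hz : ∀ i, MemLp (z i) 2 ℙ) (c : Fin N → ℝ) :
    ∫ ω, (∑ i, c i * z i ω) ^ 2
      = (∑ i, (c i) ^ 2 * variance (z i) ℙ) + (∑ i, c i * (∫ ω, z i ω)) ^ 2 := by
  set W : Fin N → Ω → ℝ := fun i ω => c i * z i ω with hW
  have hW2 : ∀ i ∈ Finset.univ, MemLp (W i) 2 ℙ := fun i _ => (hz i).const_mul (c i)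
  have hS2 : MemLp (fun ω => ∑ i, c i * z i ω) 2 ℙ := by
    have := memLp_finset_sum' (μ := (ℙ : Measure Ω)) Finset.univ hW2
    simpa [hW, Finset.sum_fn] using this
  have hpair : Set.Pairwise ↑(Finset.univ : Finset (Fin N))
      fun i j => IndepFun (W i) (W j) ℙ := by
    intro i _ j _ hij
    exact (hindep.indepFun hij).comp (measurable_const_mul (c i)) (measurable_const_mul (c j))
  have hsum : (∑ i, W i) = fun ω => ∑ i, c i * z i ω := by
    ext ω; simp [hW]
  have hvarS : variance (fun ω => ∑ i, c i * z i ω) ℙ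
      = ∑ i, (c i) ^ 2 * variance (z i) ℙ := by
    rw [← hsum, IndepFun.variance_sum hW2 hpair]
    exact Finset.sum_congr rfl fun i _ => by rw [hW]; exact variance_const_mul (c i) (z i) ℙ
  have hmean : (∫ ω, ∑ i, c i * z i ω) = ∑ i, c i * (∫ ω, z i ω) := by
    rw [integral_finset_sum _ fun i _ => ((hz i).integrable one_le_two).const_mul (c i)]
    exact Finset.sum_congr rfl fun i _ => integral_const_mul _ _
  have := variance_eq_sub hS2
  rw [hvarS, hmean] at this
  have h2 : (∫ ω, (∑ i, c i * z i ω) ^ 2) = ∫ ω, ((fun ω => ∑ i, c i * z i ω) ^ 2) ω := by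
    simp
  rw [h2]
  linarith [this]

omit [IsProbabilityMeasure (ℙ : Measure Ω)] in
lemma my_mean_eq {X Y : Ω → ℝ} (hX : Measurable X) (hY : Measurable Y)
    (h : Measure.map X ℙ = Measure.map Y ℙ) : (∫ ω, X ω) = ∫ ω, Y ω := by
  have h1 := integral_map (μ := (ℙ : Measure Ω)) (f := fun t : ℝ => t)
    hX.aemeasurable aestronglyMeasurable_id
  have h2 := integral_map (μ := (ℙ : Measure Ω)) (f := fun t : ℝ => t)
    hY.aemeasurable aestronglyMeasurable_id
  rw [h] at h1; rw [← h1, ← h2]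

omit [IsProbabilityMeasure (ℙ : Measure Ω)] in
lemma my_sq_eq {X Y : Ω → ℝ} (hX : Measurable X) (hY : Measurable Y)
    (h : Measure.map X ℙ = Measure.map Y ℙ) : (∫ ω, X ω ^ 2) = ∫ ω, Y ω ^ 2 := by
  have h1 := integral_map (μ := (ℙ : Measure Ω)) (f := fun t : ℝ => t ^ 2) hX.aemeasurable
    (measurable_id.pow_const 2).aestronglyMeasurable
  have h2 := integral_map (μ := (ℙ : Measure Ω)) (f := fun t : ℝ => t ^ 2) hY.aemeasurable
    (measurable_id.pow_const 2).aestronglyMeasurable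
  rw [h] at h1; rw [← h1, ← h2]

omit [IsProbabilityMeasure (ℙ : Measure Ω)] in
lemma my_memLp {X Y : Ω → ℝ} (hX : Measurable X) (hY : Measurable Y)
    (h : Measure.map X ℙ = Measure.map Y ℙ) (hL : MemLp Y 2 ℙ) : MemLp X 2 ℙ := by
  have h1 : MemLp (id : ℝ → ℝ) 2 (Measure.map Y ℙ) :=
    (memLp_map_measure_iff aestronglyMeasurable_id hY.aemeasurable).mpr hL
  rw [← h] at h1
  exact (memLp_map_measure_iff aestronglyMeasurable_id hX.aemeasurable).mp h1

lemma my_var_eq {X Y : Ω → ℝ} (hX : Measurable X) (hY : Measurable Y)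
    (h : Measure.map X ℙ = Measure.map Y ℙ) (hL : MemLp Y 2 ℙ) :
    variance X ℙ = variance Y ℙ := by
  have hXL := my_memLp hX hY h hL
  rw [variance_eq_sub hXL, variance_eq_sub hL]
  simp only [Pi.pow_apply]
  rw [my_sq_eq hX hY h, my_mean_eq hX hY h]

end Aux

/-- Spread–error ratio: if `x₁, …, x_M, y` are i.i.d. square-integrable real random
variables with common mean and variance `σ² > 0`, and `x̄ = (1/M) Σⱼ xⱼ`, then the
ratio of the expected ensemble spread to the expected squared error of the ensemble
mean equals `(M − 1)/(M + 1)`. -/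
theorem ensemble_spread_error_ratio
    {Ω : Type*} [MeasureSpace Ω] [IsProbabilityMeasure (ℙ : Measure Ω)]
    (M : ℕ) (hM : 1 ≤ M) (σ : ℝ) (hσ : 0 < σ ^ 2)
    (x : Fin M → Ω → ℝ) (y : Ω → ℝ)
    (hxm : ∀ i, Measurable (x i)) (hym : Measurable y)
    (hindep : iIndepFun (Fin.snoc x y : Fin (M + 1) → Ω → ℝ) ℙ)
    (hid : ∀ i, Measure.map (x i) ℙ = Measure.map y ℙ)
    (hL2 : MemLp y 2 ℙ)
    (hvar : variance y ℙ = σ ^ 2) :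
    (∫ ω, (1 / (M : ℝ)) * ∑ i, (x i ω - (1 / (M : ℝ)) * ∑ j, x j ω) ^ 2)
      / (∫ ω, ((1 / (M : ℝ)) * (∑ j, x j ω) - y ω) ^ 2)
      = ((M : ℝ) - 1) / ((M : ℝ) + 1) := by
  have hMne : (M : ℝ) ≠ 0 := Nat.cast_ne_zero.mpr (by omega)
  set z : Fin (M + 1) → Ω → ℝ := Fin.snoc x y with hz
  have hzm : ∀ k, Measurable (z k) := by
    intro k
    refine Fin.lastCases ?_ ?_ k
    · simpa [hz] using hym
    · intro i; simpa [hz] using hxm i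
  have hidz : ∀ k, Measure.map (z k) ℙ = Measure.map y ℙ := by
    intro k
    refine Fin.lastCases ?_ ?_ k
    · simp [hz]
    · intro i; simpa [hz] using hid i
  have hzL2 : ∀ k, MemLp (z k) 2 ℙ := fun k => my_memLp (hzm k) hym (hidz k) hL2
  have hzvar : ∀ k, variance (z k) ℙ = σ ^ 2 := fun k =>
    (my_var_eq (hzm k) hym (hidz k) hL2).trans hvar
  set m : ℝ := ∫ ω, y ω with hm
  have hzmean : ∀ k, (∫ ω, z k ω) = m := fun k => my_mean_eq (hzm k) hym (hidz k)
  -- coefficient vectors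
  have key : ∀ c : Fin (M + 1) → ℝ,
      ∫ ω, (∑ k, c k * z k ω) ^ 2
        = (∑ k, (c k) ^ 2) * σ ^ 2 + ((∑ k, c k) * m) ^ 2 := by
    intro c
    rw [my_key hindep hzL2 c]
    congr 1
    · rw [Finset.sum_mul]; exact Finset.sum_congr rfl fun k _ => by rw [hzvar k]
    · rw [Finset.sum_mul]; congr 1; exact Finset.sum_congr rfl fun k _ => by rw [hzmean k]
  -- numerator coefficients
  set c : Fin M → Fin (M + 1) → ℝ :=
    fun i => Fin.snoc (fun j => (if j = i then (1 : ℝ) else 0) - 1 / M) 0 with hc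
  have hrep : ∀ (i : Fin M) (ω : Ω),
      x i ω - (1 / (M : ℝ)) * ∑ j, x j ω = ∑ k, c i k * z k ω := by
    intro i ω
    rw [Fin.sum_univ_castSucc]
    simp [hc, hz, Fin.snoc_castSucc, Fin.snoc_last, sub_mul, Finset.sum_sub_distrib,
      ite_mul, Finset.sum_ite_eq', Finset.mul_sum]
  have hc0 : ∀ i : Fin M, ∑ k, c i k = 0 := by
    intro i
    rw [Fin.sum_univ_castSucc]
    simp [hc, Fin.snoc_castSucc, Fin.snoc_last, Finset.sum_sub_distrib,
      Finset.sum_ite_eq', Finset.card_univ, hMne]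
  have hc2 : ∀ i : Fin M, ∑ k, (c i k) ^ 2 = 1 - 1 / M := by
    intro i
    rw [Fin.sum_univ_castSucc]
    have h1 : ∀ j : Fin M, ((if j = i then (1 : ℝ) else 0) - 1 / M) ^ 2
        = (if j = i then (1 - 2 / (M : ℝ)) else 0) + 1 / M ^ 2 := by
      intro j; split <;> ring
    simp only [hc, Fin.snoc_castSucc, Fin.snoc_last, h1, Finset.sum_add_distrib,
      Finset.sum_ite_eq', Finset.mem_univ, if_true, Finset.sum_const, Finset.card_univ,
      Fintype.card_fin, nsmul_eq_mul]
    field_simp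
    ring
  have hterm : ∀ i : Fin M,
      (∫ ω, (x i ω - (1 / (M : ℝ)) * ∑ j, x j ω) ^ 2) = (1 - 1 / M) * σ ^ 2 := by
    intro i
    have : (fun ω => (x i ω - (1 / (M : ℝ)) * ∑ j, x j ω) ^ 2)
        = fun ω => (∑ k, c i k * z k ω) ^ 2 := by
      funext ω; rw [hrep i ω]
    rw [this, key (c i), hc0 i, hc2 i]
    ring
  have hint : ∀ i : Fin M,
      Integrable (fun ω => (x i ω - (1 / (M : ℝ)) * ∑ j, x j ω) ^ 2) ℙ := by
    intro i
    have hS : MemLp (fun ω => ∑ k, c i k * z k ω) 2 ℙ := by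
      have := memLp_finset_sum' (μ := (ℙ : Measure Ω)) Finset.univ
        (fun k _ => (hzL2 k).const_mul (c i k))
      simpa [Finset.sum_fn] using this
    have := hS.integrable_sq
    refine this.congr (Filter.Eventually.of_forall fun ω => ?_)
    dsimp only
    rw [hrep i ω]
  have hnum : (∫ ω, (1 / (M : ℝ)) * ∑ i, (x i ω - (1 / (M : ℝ)) * ∑ j, x j ω) ^ 2)
      = (1 - 1 / M) * σ ^ 2 := by
    rw [integral_const_mul, integral_finset_sum _ fun i _ => hint i]
    rw [Finset.sum_congr rfl fun i _ => hterm i]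
    simp only [Finset.sum_const, Finset.card_univ, Fintype.card_fin, nsmul_eq_mul]
    field_simp
  -- denominator
  set c' : Fin (M + 1) → ℝ := Fin.snoc (fun _ => 1 / M) (-1) with hc'
  have hrep' : ∀ ω : Ω, (1 / (M : ℝ)) * (∑ j, x j ω) - y ω = ∑ k, c' k * z k ω := by
    intro ω
    rw [Fin.sum_univ_castSucc]
    simp [hc', hz, Fin.snoc_castSucc, Fin.snoc_last, Finset.mul_sum]
    ring
  have hc'0 : ∑ k, c' k = 0 := by
    rw [Fin.sum_univ_castSucc]
    simp [hc', Fin.snoc_castSucc, Fin.snoc_last, Finset.card_univ, hMne]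
  have hc'2 : ∑ k, (c' k) ^ 2 = 1 / M + 1 := by
    rw [Fin.sum_univ_castSucc]
    simp only [hc', Fin.snoc_castSucc, Fin.snoc_last, Finset.sum_const, Finset.card_univ,
      Fintype.card_fin, nsmul_eq_mul]
    field_simp
  have hden : (∫ ω, ((1 / (M : ℝ)) * (∑ j, x j ω) - y ω) ^ 2) = (1 / M + 1) * σ ^ 2 := by
    have : (fun ω => ((1 / (M : ℝ)) * (∑ j, x j ω) - y ω) ^ 2)
        = fun ω => (∑ k, c' k * z k ω) ^ 2 := by
      funext ω; rw [hrep' ω]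
    rw [this, key c', hc'0, hc'2]
    ring
  rw [hnum, hden]
  have hM1 : (1 : ℝ) ≤ (M : ℝ) := by exact_mod_cast hM
  have hden_ne : (1 / (M : ℝ) + 1) * σ ^ 2 ≠ 0 := by
    have : (0 : ℝ) < 1 / (M : ℝ) + 1 := by positivity
    exact mul_ne_zero this.ne' hσ.ne'
  have hσne : σ ≠ 0 := by rintro rfl; simp at hσ
  field_simp
  ring
end
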